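/- arXiv:1204.6008 — 5 statements merged into one kernel-verified Lean document; each statement's English description precedes it below -/
import Mathlib

section
/- Let d ≥ 1, p ∈ [1,∞), and let φ : ℝ^d → ℝ^d be a bi-Lipschitz homeomorphism preserving Lebesgue measure. There is a constant C depending only on d and p such that: if f ∈ L^p_loc(ℝ^d) satisfies (|B|⁻¹ ∫_B |f − av_B f|^p dx)^{1/p} ≤ N for every ball B ⊂ ℝ^d, then (|B|⁻¹ ∫_B |f∘φ − av_B(f∘φ)|^p dx)^{1/p} ≤ C · K(φ)^{d/p} · N for every ball B ⊂ ℝ^d. -/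
/-!
Write `L = K(φ)`. Both quotients in `K(φ)` are nonnegative, so `φ` is `L`-Lipschitz and maps
`B = B(x, r)` into `B' = B(φ x, L r)`, a ball with `|B'| = L^d |B|`. Since `φ` preserves measure,
the mean of `|f ∘ φ - c|^p` over `B` is the integral of `|f - c|^p` over `φ(B) ⊆ B'` divided by
`|B|`, hence at most `L^d` times the mean over `B'`; with `c = av_{B'} f` that mean is `≤ N^p`.
Finally, centring at the mean of `f ∘ φ` instead of at `c` costs at most a factor `2`
(Minkowski, and `|c - av g| ≤ ‖g - c‖_p` on a probability space), so `C = 2` works.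
-/

open Metric MeasureTheory

/-- `K(φ)`: the supremum over pairs of distinct points of
`|φ(x) − φ(y)|/|x − y| + |x − y|/|φ(x) − φ(y)|`. -/
noncomputable def Kconst {d : ℕ} (φ : EuclideanSpace ℝ (Fin d) → EuclideanSpace ℝ (Fin d)) : ℝ :=
  ⨆ q : {p : EuclideanSpace ℝ (Fin d) × EuclideanSpace ℝ (Fin d) // p.1 ≠ p.2},
    dist (φ q.1.1) (φ q.1.2) / dist q.1.1 q.1.2 +
      dist q.1.1 q.1.2 / dist (φ q.1.1) (φ q.1.2)

open Function Set

namespace MeasureTheory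

variable {α : Type*} [MeasurableSpace α] {μ : Measure α}

theorem norm_integral_le_lpNorm [IsProbabilityMeasure μ] {p : ENNReal} (hp : 1 ≤ p)
    {g : α → ℝ} (hg : MemLp g p μ) : ‖∫ x, g x ∂μ‖ ≤ lpNorm g p μ := by
  have hg₁ : AEStronglyMeasurable g μ := hg.aestronglyMeasurable
  calc ‖∫ x, g x ∂μ‖ ≤ ∫ x, ‖g x‖ ∂μ := norm_integral_le_integral_norm g
    _ = lpNorm g 1 μ := (lpNorm_one_eq_integral_norm hg₁).symm
    _ ≤ lpNorm g p μ := by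
      rw [← toReal_eLpNorm hg₁, ← toReal_eLpNorm hg₁]
      exact ENNReal.toReal_mono hg.eLpNorm_ne_top (eLpNorm_le_eLpNorm_of_exponent_le hp hg₁)

theorem lpNorm_sub_integral_le [IsProbabilityMeasure μ] {p : ENNReal} (hp : 1 ≤ p)
    {h : α → ℝ} (hh : MemLp h p μ) (c : ℝ) :
    lpNorm (fun y ↦ h y - ∫ z, h z ∂μ) p μ ≤ 2 * lpNorm (fun y ↦ h y - c) p μ := by
  have hp₀ : p ≠ 0 := (zero_lt_one.trans_le hp).ne'
  have hhc : MemLp (fun y ↦ h y - c) p μ := hh.sub (memLp_const c)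
  have hmean : ∫ y, (h y - c) ∂μ = (∫ z, h z ∂μ) - c := by
    rw [integral_sub (hh.integrable hp) (integrable_const c), integral_const, probReal_univ,
      one_smul]
  calc lpNorm (fun y ↦ h y - ∫ z, h z ∂μ) p μ
      = lpNorm ((fun y ↦ h y - c) + fun _ ↦ c - ∫ z, h z ∂μ) p μ := by
        congr 1; ext y; simp
    _ ≤ lpNorm (fun y ↦ h y - c) p μ + |c - ∫ z, h z ∂μ| := by
        grw [lpNorm_add_le hhc hp]
        rw [lpNorm_const hp₀ (IsProbabilityMeasure.ne_zero μ), probReal_univ, Real.one_rpow,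
          mul_one, Real.norm_eq_abs]
    _ ≤ lpNorm (fun y ↦ h y - c) p μ + lpNorm (fun y ↦ h y - c) p μ := by
        rw [abs_sub_comm, ← hmean, ← Real.norm_eq_abs]
        exact add_le_add_right (norm_integral_le_lpNorm hp hhc) _
    _ = 2 * lpNorm (fun y ↦ h y - c) p μ := (two_mul _).symm

theorem rpow_average_abs_rpow_eq_lpNorm {p : ℝ} (hp : 0 < p) {g : α → ℝ}
    (hg : AEStronglyMeasurable g μ) :
    (⨍ x, |g x| ^ p ∂μ) ^ (1 / p) = lpNorm g (ENNReal.ofReal p) ((μ univ)⁻¹ • μ) := by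
  rw [lpNorm_eq_integral_norm_rpow_toReal (by simpa using hp) ENNReal.ofReal_ne_top
    (hg.smul_measure _), ENNReal.toReal_ofReal hp.le, one_div]
  rfl

theorem rpow_average_abs_sub_average_le [IsFiniteMeasure μ] [NeZero μ] {p : ℝ} (hp : 1 ≤ p)
    {h : α → ℝ} (hh : MemLp h (ENNReal.ofReal p) μ) (c : ℝ) :
    (⨍ y, |h y - ⨍ z, h z ∂μ| ^ p ∂μ) ^ (1 / p) ≤ 2 * (⨍ y, |h y - c| ^ p ∂μ) ^ (1 / p) := by
  have hp₀ : 0 < p := zero_lt_one.trans_le hp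
  have hh' : MemLp h (ENNReal.ofReal p) ((μ univ)⁻¹ • μ) :=
    hh.smul_measure (ENNReal.inv_ne_top.2 (Measure.measure_univ_ne_zero.2 (NeZero.ne μ)))
  have hsub (a : ℝ) : AEStronglyMeasurable (fun y ↦ h y - a) μ :=
    hh.aestronglyMeasurable.sub aestronglyMeasurable_const
  rw [rpow_average_abs_rpow_eq_lpNorm hp₀ (hsub _), rpow_average_abs_rpow_eq_lpNorm hp₀ (hsub c)]
  exact lpNorm_sub_integral_le (by simpa using hp) hh' c

theorem MeasurePreserving.setAverage_comp_le {β : Type*} [MeasurableSpace β] {ν : Measure β}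
    {φ : α → β} (hφ : MeasurePreserving φ μ ν) (he : MeasurableEmbedding φ) {s : Set α}
    {t : Set β} (hst : MapsTo φ s t) {g : β → ℝ} (hg : 0 ≤ g) (hgt : IntegrableOn g t ν)
    (ht : ν t ≠ ⊤) :
    ⨍ x in s, g (φ x) ∂μ ≤ ν.real t / μ.real s * ⨍ y in t, g y ∂ν := by
  rw [setAverage_eq, ← hφ.setIntegral_image_emb he, smul_eq_mul, div_eq_inv_mul, mul_assoc,
    ← smul_eq_mul (ν.real t), measure_smul_setAverage g ht]
  exact mul_le_mul_of_nonneg_left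
    (setIntegral_mono_set hgt (.of_forall hg) hst.image_subset.eventuallyLE) (by positivity)

theorem MeasurePreserving.memLp_comp_restrict {β E : Type*} [MeasurableSpace β]
    [NormedAddCommGroup E] {ν : Measure β} {φ : α → β} (hφ : MeasurePreserving φ μ ν)
    (he : MeasurableEmbedding φ) {s : Set α} {t : Set β} (hst : MapsTo φ s t) {p : ENNReal}
    {f : β → E} (hf : MemLp f p (ν.restrict t)) : MemLp (fun x ↦ f (φ x)) p (μ.restrict s) :=
  (hf.mono_measure (Measure.restrict_mono hst.image_subset le_rfl)).comp_measurePreserving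
    (hφ.restrict_image_emb he s)

theorem MemLp.integrable_abs_sub_const_rpow [IsFiniteMeasure μ] {p : ℝ} (hp : 0 < p)
    {f : α → ℝ} (hf : MemLp f (ENNReal.ofReal p) μ) (c : ℝ) :
    Integrable (fun y ↦ |f y - c| ^ p) μ := by
  simpa [Real.norm_eq_abs, ENNReal.toReal_ofReal hp.le] using
    (hf.sub (memLp_const c)).integrable_norm_rpow (by simpa using hp) ENNReal.ofReal_ne_top

theorem Measure.addHaar_real_ball_mul_div {E : Type*} [NormedAddCommGroup E]
    [NormedSpace ℝ E] [MeasurableSpace E] [BorelSpace E] [FiniteDimensional ℝ E]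
    (μ : Measure E) [μ.IsAddHaarMeasure] (x y : E) {s r : ℝ} (hs : 0 < s) (hr : 0 < r) :
    μ.real (ball y (s * r)) / μ.real (ball x r) = s ^ Module.finrank ℝ E := by
  have hpos : 0 < μ.real (ball x r) :=
    ENNReal.toReal_pos (measure_ball_pos μ x hr).ne' measure_ball_lt_top.ne
  rw [div_eq_iff hpos.ne', measureReal_def, Measure.addHaar_ball_mul_of_pos μ y hs,
    ENNReal.toReal_mul, ENNReal.toReal_ofReal (by positivity), ← Measure.addHaar_ball_center μ x,
    measureReal_def]

end MeasureTheory

section Kconst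

variable {d : ℕ} {φ : EuclideanSpace ℝ (Fin d) → EuclideanSpace ℝ (Fin d)} {A A' : NNReal}

theorem le_Kconst (hinj : Injective φ) (hφ : LipschitzWith A φ)
    (hψ : LipschitzWith A' (invFun φ)) {a b : EuclideanSpace ℝ (Fin d)} (hab : a ≠ b) :
    dist (φ a) (φ b) / dist a b + dist a b / dist (φ a) (φ b) ≤ Kconst φ := by
  refine le_ciSup (f := fun q : {q : _ × _ // q.1 ≠ q.2} ↦ dist (φ q.1.1) (φ q.1.2) /
    dist q.1.1 q.1.2 + dist q.1.1 q.1.2 / dist (φ q.1.1) (φ q.1.2)) ⟨A + A', ?_⟩ ⟨(a, b), hab⟩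
  rintro _ ⟨⟨⟨x, y⟩, hxy⟩, rfl⟩
  dsimp only
  gcongr
  · exact div_le_of_le_mul₀ dist_nonneg A.2 (hφ.dist_le_mul x y)
  · refine div_le_of_le_mul₀ dist_nonneg A'.2 ?_
    simpa only [leftInverse_invFun hinj _] using hψ.dist_le_mul (φ x) (φ y)

theorem dist_le_Kconst_mul (hinj : Injective φ) (hφ : LipschitzWith A φ)
    (hψ : LipschitzWith A' (invFun φ)) (a b : EuclideanSpace ℝ (Fin d)) :
    dist (φ a) (φ b) ≤ Kconst φ * dist a b := by
  rcases eq_or_ne a b with rfl | hab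
  · simp
  rw [← div_le_iff₀ (dist_pos.2 hab)]
  exact le_of_add_le_of_nonneg_left (le_Kconst hinj hφ hψ hab) (by positivity)

theorem Kconst_pos [Nontrivial (EuclideanSpace ℝ (Fin d))] (hinj : Injective φ)
    (hφ : LipschitzWith A φ) (hψ : LipschitzWith A' (invFun φ)) : 0 < Kconst φ := by
  obtain ⟨a, b, hab⟩ := exists_pair_ne (EuclideanSpace ℝ (Fin d))
  have : 0 < dist a b := dist_pos.2 hab
  have : 0 < dist (φ a) (φ b) := dist_pos.2 (hinj.ne hab)
  exact (by positivity : (0 : ℝ) < _).trans_le (le_Kconst hinj hφ hψ hab)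

theorem mapsTo_ball_Kconst (hinj : Injective φ) (hφ : LipschitzWith A φ)
    (hψ : LipschitzWith A' (invFun φ)) (hK : 0 < Kconst φ) (x : EuclideanSpace ℝ (Fin d))
    (r : ℝ) : MapsTo φ (ball x r) (ball (φ x) (Kconst φ * r)) := fun y hy ↦
  (dist_le_Kconst_mul hinj hφ hψ y x).trans_lt (mul_lt_mul_of_pos_left hy hK)

theorem setAverage_ball_comp_le_Kconst_pow (hinj : Injective φ) (hφ : LipschitzWith A φ)
    (hψ : LipschitzWith A' (invFun φ)) (hmp : MeasurePreserving φ volume volume)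
    (hK : 0 < Kconst φ) {g : EuclideanSpace ℝ (Fin d) → ℝ} (hg : 0 ≤ g)
    {x : EuclideanSpace ℝ (Fin d)} {r : ℝ} (hr : 0 < r)
    (hgi : IntegrableOn g (ball (φ x) (Kconst φ * r))) :
    ⨍ y in ball x r, g (φ y) ≤ Kconst φ ^ d * ⨍ y in ball (φ x) (Kconst φ * r), g y := by
  have he : MeasurableEmbedding φ := hφ.continuous.measurableEmbedding hinj
  have := hmp.setAverage_comp_le he (mapsTo_ball_Kconst hinj hφ hψ hK x r) hg hgi
    measure_ball_lt_top.ne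
  rwa [Measure.addHaar_real_ball_mul_div volume x (φ x) hK hr, finrank_euclideanSpace_fin]
    at this

end Kconst

/-- Let `d ≥ 1`, `p ∈ [1,∞)` and `φ` a bi-Lipschitz measure-preserving homeomorphism of `ℝ^d`.
There is `C = C(d,p)` such that if `f ∈ L^p_loc` has `BMO_p` seminorm at most `N`, then
`f ∘ φ` has `BMO_p` seminorm at most `C · K(φ)^{d/p} · N`. -/
theorem stmt4 (d : ℕ) (hd : 1 ≤ d) (p : ℝ) (hp : 1 ≤ p) :
    ∃ C : ℝ, 0 < C ∧
      ∀ (φ : EuclideanSpace ℝ (Fin d) → EuclideanSpace ℝ (Fin d)),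
        Function.Bijective φ →
        (∃ A : NNReal, LipschitzWith A φ) →
        (∃ A : NNReal, LipschitzWith A (Function.invFun φ)) →
        MeasurePreserving φ volume volume →
        ∀ (f : EuclideanSpace ℝ (Fin d) → ℝ) (N : ℝ), 0 ≤ N →
          (∀ (x : EuclideanSpace ℝ (Fin d)) (r : ℝ), 0 < r →
            MemLp f (ENNReal.ofReal p) (volume.restrict (ball x r))) →
          (∀ (x : EuclideanSpace ℝ (Fin d)) (r : ℝ), 0 < r →
            (⨍ y in ball x r, |f y - ⨍ z in ball x r, f z| ^ p) ^ (1 / p) ≤ N) →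
          ∀ (x : EuclideanSpace ℝ (Fin d)) (r : ℝ), 0 < r →
            (⨍ y in ball x r, |f (φ y) - ⨍ z in ball x r, f (φ z)| ^ p) ^ (1 / p)
              ≤ C * Kconst φ ^ ((d : ℝ) / p) * N := by
  have : Nonempty (Fin d) := ⟨⟨0, hd⟩⟩
  refine ⟨2, two_pos, ?_⟩
  rintro φ hbij ⟨A, hφ⟩ ⟨A', hψ⟩ hmp f N - hloc hbmo x r hr
  set L := Kconst φ
  have hL : 0 < L := Kconst_pos hbij.1 hφ hψ
  set B' := ball (φ x) (L * r)
  set c := ⨍ z in B', f z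
  have hfB' : MemLp f (ENNReal.ofReal p) (volume.restrict B') := hloc _ _ (by positivity)
  have hfφ : MemLp (fun y ↦ f (φ y)) (ENNReal.ofReal p) (volume.restrict (ball x r)) :=
    hmp.memLp_comp_restrict (hφ.continuous.measurableEmbedding hbij.1)
      (mapsTo_ball_Kconst hbij.1 hφ hψ hL x r) hfB'
  have : Fact (volume B' < ⊤) := ⟨measure_ball_lt_top⟩
  have : Fact (volume (ball x r) < ⊤) := ⟨measure_ball_lt_top⟩
  have : NeZero (volume (ball x r)) := ⟨(measure_ball_pos volume x hr).ne'⟩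
  have hosc : 0 ≤ ⨍ y in B', |f y - c| ^ p := integral_nonneg fun _ ↦ by positivity
  calc (⨍ y in ball x r, |f (φ y) - ⨍ z in ball x r, f (φ z)| ^ p) ^ (1 / p)
      ≤ 2 * (⨍ y in ball x r, |f (φ y) - c| ^ p) ^ (1 / p) :=
        rpow_average_abs_sub_average_le hp hfφ c
    _ ≤ 2 * (L ^ d * ⨍ y in B', |f y - c| ^ p) ^ (1 / p) := by
        gcongr
        · exact integral_nonneg fun _ ↦ by positivity
        · exact setAverage_ball_comp_le_Kconst_pow hbij.1 hφ hψ hmp hL (fun _ ↦ by positivity) hr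
            (hfB'.integrable_abs_sub_const_rpow (by positivity) c)
    _ = 2 * L ^ ((d : ℝ) / p) * (⨍ y in B', |f y - c| ^ p) ^ (1 / p) := by
        rw [Real.mul_rpow (by positivity) hosc, ← Real.rpow_natCast, ← Real.rpow_mul hL.le,
          mul_one_div, mul_assoc]
    _ ≤ 2 * L ^ ((d : ℝ) / p) * N := by
        gcongr
        exact hbmo _ _ (by positivity)
end

section
/- Let d ≥ 1, a ∈ (0,1], p ∈ [1,∞). There is a constant C depending only on d, a and p such that: if f ∈ L^p_loc(ℝ^d) satisfies (|B|^{−1−ap/d} ∫_B |f − av_B f|^p)^{1/p} ≤ N for every ball B ⊂ ℝ^d, then for every ball B and every λ ≥ 1, |av_B f − av_{λB} f| ≤ C · λ^a · |B|^{a/d} · N, where λB denotes the concentric dilate of B by factor λ. -/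
/-!
By Jensen's inequality the `Lip_p(a)` condition on a ball `B'` bounds the mean oscillation
`⨍_{B'} |f - av_{B'} f|` by `|B'|^{a/d} N`. Comparing the averages over `B ⊆ λB` costs the volume
ratio `λ^d`, so `|av_B f - av_{λB} f| ≤ λ^{d+a} |B|^{a/d} N`, which is the claim for bounded `λ`.
For large `λ` one telescopes along the dyadic dilates `B, 2B, 4B, …`: the `k`-th step contributes
`O((2^k)^a |B|^{a/d} N)`, a geometric series summing to `O(λ^a |B|^{a/d} N)`.
-/

open Metric MeasureTheory Set

section Averages

variable {α : Type*} [MeasurableSpace α] {μ : Measure α} {s t : Set α} {f : α → ℝ}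

theorem abs_setAverage_sub_setAverage_le (hst : s ⊆ t) (hs : μ s ≠ 0) (ht : μ t ≠ ⊤)
    (hf : IntegrableOn f t μ) :
    |⨍ x in s, f x ∂μ - ⨍ x in t, f x ∂μ|
      ≤ μ.real t / μ.real s * ⨍ x in t, |f x - ⨍ y in t, f y ∂μ| ∂μ := by
  set c := ⨍ y in t, f y ∂μ
  have hs_top : μ s ≠ ⊤ := ne_top_of_le_ne_top ht (measure_mono hst)
  have hs_pos : 0 < μ.real s := ENNReal.toReal_pos hs hs_top
  have ht_pos : 0 < μ.real t := ENNReal.toReal_pos (ne_bot_of_le_ne_bot hs (measure_mono hst)) ht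
  have hdev : IntegrableOn (fun x => |f x - c|) t μ := (hf.sub (integrableOn_const ht)).abs
  calc |⨍ x in s, f x ∂μ - c| = |⨍ x in s, (f x - c) ∂μ| := by
        rw [setAverage_eq, setAverage_eq, integral_sub (hf.mono_set hst)
          (integrableOn_const hs_top), setIntegral_const, smul_eq_mul, smul_eq_mul, smul_eq_mul,
          mul_sub, inv_mul_cancel_left₀ hs_pos.ne']
    _ ≤ (μ.real s)⁻¹ * ∫ x in s, |f x - c| ∂μ := by
        rw [setAverage_eq, smul_eq_mul, abs_mul, abs_inv, abs_of_pos hs_pos]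
        gcongr
        exact abs_integral_le_integral_abs
    _ ≤ (μ.real s)⁻¹ * ∫ x in t, |f x - c| ∂μ := by
        gcongr ?_ * ?_
        exact setIntegral_mono_set hdev (.of_forall fun _ => abs_nonneg _) hst.eventuallyLE
    _ = μ.real t / μ.real s * ⨍ x in t, |f x - c| ∂μ := by
        rw [setAverage_eq, smul_eq_mul]
        field_simp

theorem setAverage_abs_le_rpow {p : ℝ} (hp : 1 ≤ p) (hs : μ s ≠ 0) (hs_top : μ s ≠ ⊤)
    (hf : MemLp f (ENNReal.ofReal p) (μ.restrict s)) :
    ⨍ x in s, |f x| ∂μ ≤ (⨍ x in s, |f x| ^ p ∂μ) ^ (1 / p) := by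
  have hp0 : 0 < p := by linarith
  have : Fact (μ s < ⊤) := ⟨hs_top.lt_top⟩
  have hint : IntegrableOn (fun x => |f x|) s μ := (hf.integrable (by simpa using hp)).abs
  have hint_pow : IntegrableOn (fun x => |f x| ^ p) s μ := by
    have := hf.integrable_norm_rpow (by simpa using hp0) ENNReal.ofReal_ne_top
    simp only [ENNReal.toReal_ofReal hp0.le, Real.norm_eq_abs] at this
    exact this
  have hjensen : (⨍ x in s, |f x| ∂μ) ^ p ≤ ⨍ x in s, |f x| ^ p ∂μ :=
    (convexOn_rpow hp).map_set_average_le (Real.continuous_rpow_const hp0.le).continuousOn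
      isClosed_Ici hs hs_top (.of_forall fun _ => mem_Ici.2 (abs_nonneg _)) hint hint_pow
  have havg : 0 ≤ ⨍ x in s, |f x| ∂μ := integral_nonneg fun _ => abs_nonneg _
  calc ⨍ x in s, |f x| ∂μ = ((⨍ x in s, |f x| ∂μ) ^ p) ^ (1 / p) := by
        rw [← Real.rpow_mul havg, mul_one_div_cancel hp0.ne', Real.rpow_one]
    _ ≤ (⨍ x in s, |f x| ^ p ∂μ) ^ (1 / p) := by gcongr

theorem setAverage_abs_sub_setAverage_le {p b N : ℝ} (hp : 1 ≤ p) (hs : μ s ≠ 0)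
    (hs_top : μ s ≠ ⊤) (hf : MemLp f (ENNReal.ofReal p) (μ.restrict s))
    (hN : (μ.real s ^ (-(1 + b * p)) * ∫ x in s, |f x - ⨍ y in s, f y ∂μ| ^ p ∂μ) ^ (1 / p) ≤ N) :
    ⨍ x in s, |f x - ⨍ y in s, f y ∂μ| ∂μ ≤ μ.real s ^ b * N := by
  set c := ⨍ y in s, f y ∂μ
  set I := ∫ x in s, |f x - c| ^ p ∂μ
  have : Fact (μ s < ⊤) := ⟨hs_top.lt_top⟩
  have hm : 0 < μ.real s := ENNReal.toReal_pos hs hs_top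
  have hp0 : 0 < p := by linarith
  have hI : 0 ≤ I := integral_nonneg fun _ => by positivity
  calc ⨍ x in s, |f x - c| ∂μ ≤ (⨍ x in s, |f x - c| ^ p ∂μ) ^ (1 / p) :=
        setAverage_abs_le_rpow hp hs hs_top (hf.sub (memLp_const c))
    _ = ((μ.real s ^ b) ^ p * (μ.real s ^ (-(1 + b * p)) * I)) ^ (1 / p) := by
        rw [setAverage_eq, smul_eq_mul, ← mul_assoc, ← Real.rpow_mul hm.le, ← Real.rpow_add hm,
          show b * p + -(1 + b * p) = -1 by ring, Real.rpow_neg_one]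
    _ = μ.real s ^ b * (μ.real s ^ (-(1 + b * p)) * I) ^ (1 / p) := by
        rw [Real.mul_rpow (by positivity) (by positivity), ← Real.rpow_mul (by positivity),
          mul_one_div_cancel hp0.ne', Real.rpow_one]
    _ ≤ μ.real s ^ b * N := by gcongr

end Averages

section Balls

open Module

variable {E : Type*} [NormedAddCommGroup E] [NormedSpace ℝ E] [MeasurableSpace E] [BorelSpace E]
  [FiniteDimensional ℝ E] [Nontrivial E] (μ : Measure E) [μ.IsAddHaarMeasure]

theorem addHaar_real_ball_mul_eq (x : E) {t : ℝ} (ht : 0 ≤ t) (r : ℝ) :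
    μ.real (ball x (t * r)) = t ^ finrank ℝ E * μ.real (ball x r) := by
  rw [measureReal_def, measureReal_def, Measure.addHaar_ball_mul μ x ht r,
    ← Measure.addHaar_ball_center μ x r, ENNReal.toReal_mul, ENNReal.toReal_ofReal (by positivity)]

theorem addHaar_real_ball_mul_rpow {d : ℕ} (hE : finrank ℝ E = d) (x : E) {t : ℝ} (ht : 0 ≤ t)
    (r b : ℝ) : μ.real (ball x (t * r)) ^ (b / d) = t ^ b * μ.real (ball x r) ^ (b / d) := by
  have hd : (d : ℝ) ≠ 0 := by
    rw [← hE]; exact_mod_cast (finrank_pos (R := ℝ) (M := E)).ne'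
  rw [addHaar_real_ball_mul_eq μ x ht, hE, Real.mul_rpow (by positivity) measureReal_nonneg,
    ← Real.rpow_natCast, ← Real.rpow_mul ht, mul_div_cancel₀ b hd]

variable {μ}

theorem abs_average_ball_sub_average_ball_mul_le {d : ℕ} (hE : finrank ℝ E = d) {a p N : ℝ}
    (hp : 1 ≤ p) {f : E → ℝ} {x : E} {r lam : ℝ} (hr : 0 < r) (hlam : 1 ≤ lam)
    (hf : MemLp f (ENNReal.ofReal p) (μ.restrict (ball x (lam * r))))
    (hN : (μ.real (ball x (lam * r)) ^ (-(1 + a * p / d)) *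
      ∫ y in ball x (lam * r), |f y - ⨍ z in ball x (lam * r), f z ∂μ| ^ p ∂μ) ^ (1 / p) ≤ N) :
    |⨍ y in ball x r, f y ∂μ - ⨍ y in ball x (lam * r), f y ∂μ|
      ≤ lam ^ d * lam ^ a * μ.real (ball x r) ^ (a / d) * N := by
  have hm : 0 < μ.real (ball x r) :=
    ENNReal.toReal_pos (measure_ball_pos μ x hr).ne' measure_ball_lt_top.ne
  have hlam0 : 0 ≤ lam := by linarith
  have : Fact (μ (ball x (lam * r)) < ⊤) := ⟨measure_ball_lt_top⟩
  calc |⨍ y in ball x r, f y ∂μ - ⨍ y in ball x (lam * r), f y ∂μ|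
      ≤ μ.real (ball x (lam * r)) / μ.real (ball x r) *
          ⨍ y in ball x (lam * r), |f y - ⨍ z in ball x (lam * r), f z ∂μ| ∂μ :=
        abs_setAverage_sub_setAverage_le (ball_subset_ball (le_mul_of_one_le_left hr.le hlam))
          (measure_ball_pos μ x hr).ne' measure_ball_lt_top.ne
          (hf.integrable (by simpa using hp))
    _ ≤ μ.real (ball x (lam * r)) / μ.real (ball x r) *
          (μ.real (ball x (lam * r)) ^ (a / d) * N) := by
        gcongr
        refine setAverage_abs_sub_setAverage_le hp (measure_ball_pos μ x (by positivity)).ne'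
          measure_ball_lt_top.ne hf ?_
        rwa [div_mul_eq_mul_div]
    _ = lam ^ d * lam ^ a * μ.real (ball x r) ^ (a / d) * N := by
        rw [addHaar_real_ball_mul_rpow μ hE x hlam0, addHaar_real_ball_mul_eq μ x hlam0, hE]
        field_simp

end Balls

theorem abs_sub_le_of_dyadic_steps {g : ℝ → ℝ} {a K : ℝ} (ha : 0 < a) (hK : 0 ≤ K)
    (hstep : ∀ t, 1 ≤ t → ∀ s ∈ Icc (1 : ℝ) 2, |g t - g (s * t)| ≤ K * t ^ a) {lam : ℝ}
    (hlam : 1 ≤ lam) : |g 1 - g lam| ≤ 2 ^ a / (2 ^ a - 1) * K * lam ^ a := by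
  have h2a : 1 < (2 : ℝ) ^ a := Real.one_lt_rpow one_lt_two ha
  -- `C ≥ K` covers a single step and `C + K ≤ 2 ^ a * C` lets the bound survive halving `lam`.
  set C := 2 ^ a / (2 ^ a - 1) * K
  have hKC : K ≤ C := le_mul_of_one_le_left hK ((one_le_div (by linarith)).2 (by linarith))
  have hC : C + K ≤ C * 2 ^ a := by
    have : (2 : ℝ) ^ a - 1 ≠ 0 := by linarith
    have : C * (2 ^ a - 1) = 2 ^ a * K := by simp only [C]; field_simp
    nlinarith
  suffices ∀ n : ℕ, ∀ lam : ℝ, 1 ≤ lam → lam ≤ 2 ^ n → |g 1 - g lam| ≤ C * lam ^ a by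
    obtain ⟨n, hn⟩ := pow_unbounded_of_one_lt lam one_lt_two
    exact this n lam hlam hn.le
  intro n
  induction n with
  | zero =>
    intro lam h1 h2
    obtain rfl : lam = 1 := le_antisymm (by simpa using h2) h1
    simpa using le_trans hK hKC
  | succ n ih =>
    intro lam h1 h2
    by_cases hlam2 : lam ≤ 2
    · calc |g 1 - g lam| ≤ K := by simpa using hstep 1 le_rfl lam ⟨h1, hlam2⟩
        _ ≤ C * lam ^ a :=
          hKC.trans (le_mul_of_one_le_right (hK.trans hKC) (Real.one_le_rpow h1 ha.le))
    · have hhalf : 1 ≤ lam / 2 := by linarith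
      calc |g 1 - g lam| ≤ |g 1 - g (lam / 2)| + |g (lam / 2) - g (2 * (lam / 2))| := by
            rw [mul_div_cancel₀ lam two_ne_zero]; exact abs_sub_le _ _ _
        _ ≤ C * (lam / 2) ^ a + K * (lam / 2) ^ a :=
            add_le_add (ih _ hhalf (by rw [pow_succ] at h2; linarith))
              (hstep _ hhalf 2 ⟨one_le_two, le_rfl⟩)
        _ = (C + K) * lam ^ a / 2 ^ a := by
            rw [Real.div_rpow (by linarith) zero_le_two]; ring
        _ ≤ C * lam ^ a := by
            rw [div_le_iff₀ (by positivity)]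
            nlinarith [Real.rpow_nonneg (by linarith : (0 : ℝ) ≤ lam) a]

/-- Let `d ≥ 1`, `a ∈ (0,1]`, `p ∈ [1,∞)`. There is `C = C(d,a,p)` such that if
`f ∈ L^p_loc(ℝ^d)` has `Lip_p(a)` seminorm at most `N`, then for every ball `B` and every
`λ ≥ 1`, `|av_B f − av_{λB} f| ≤ C · λ^a · |B|^{a/d} · N`. -/
theorem stmt9 (d : ℕ) (hd : 1 ≤ d) (a : ℝ) (ha : a ∈ Set.Ioc (0 : ℝ) 1)
    (p : ℝ) (hp : 1 ≤ p) :
    ∃ C : ℝ, 0 < C ∧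
      ∀ (f : EuclideanSpace ℝ (Fin d) → ℝ) (N : ℝ), 0 ≤ N →
        (∀ (x : EuclideanSpace ℝ (Fin d)) (r : ℝ), 0 < r →
          MemLp f (ENNReal.ofReal p) (volume.restrict (ball x r))) →
        (∀ (x : EuclideanSpace ℝ (Fin d)) (r : ℝ), 0 < r →
          ((volume (ball x r)).toReal ^ (-(1 + a * p / d)) *
            ∫ y in ball x r, |f y - ⨍ z in ball x r, f z| ^ p) ^ (1 / p) ≤ N) →
        ∀ (x : EuclideanSpace ℝ (Fin d)) (r : ℝ), 0 < r → ∀ lam : ℝ, 1 ≤ lam →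
          |(⨍ y in ball x r, f y) - ⨍ y in ball x (lam * r), f y|
            ≤ C * lam ^ a * (volume (ball x r)).toReal ^ (a / d) * N := by
  have : Nontrivial (EuclideanSpace ℝ (Fin d)) :=
    have : Nonempty (Fin d) := ⟨⟨0, hd⟩⟩
    inferInstance
  have hE := finrank_euclideanSpace_fin (𝕜 := ℝ) (n := d)
  have h2a : 1 < (2 : ℝ) ^ a := Real.one_lt_rpow one_lt_two ha.1
  refine ⟨2 ^ a / (2 ^ a - 1) * (2 ^ d * 2 ^ a), by have := sub_pos.2 h2a; positivity, ?_⟩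
  intro f N hN hmem hlip x r hr lam hlam
  set m := volume.real (ball x r)
  have hstep : ∀ t, 1 ≤ t → ∀ s ∈ Icc (1 : ℝ) 2,
      |(⨍ y in ball x (t * r), f y) - ⨍ y in ball x (s * t * r), f y|
        ≤ 2 ^ d * 2 ^ a * m ^ (a / d) * N * t ^ a := by
    rintro t ht s ⟨hs1, hs2⟩
    have htr : 0 < t * r := by positivity
    calc _ ≤ s ^ d * s ^ a * volume.real (ball x (t * r)) ^ (a / d) * N := by
          simpa only [mul_assoc] using abs_average_ball_sub_average_ball_mul_le hE hp htr hs1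
            (hmem x _ (by positivity)) (hlip x _ (by positivity))
      _ = s ^ d * s ^ a * t ^ a * m ^ (a / d) * N := by
          rw [addHaar_real_ball_mul_rpow volume hE x (by positivity)]; ring
      _ ≤ 2 ^ d * 2 ^ a * t ^ a * m ^ (a / d) * N := by
          gcongr; exact ha.1.le
      _ = 2 ^ d * 2 ^ a * m ^ (a / d) * N * t ^ a := by ring
  have := abs_sub_le_of_dyadic_steps (g := fun t => ⨍ y in ball x (t * r), f y) ha.1
    (by positivity) hstep hlam
  rw [one_mul] at this
  refine this.trans_eq ?_
  simp only [m, measureReal_def]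
  ring
end

section
/- Let d ≥ 1 and let φ : ℝ^d → ℝ^d be a bi-Lipschitz homeomorphism preserving Lebesgue measure, with Lipschitz constant L (i.e. |φ(x) − φ(y)| ≤ L|x − y| for all x, y, and L is the least such constant). Then the inverse map φ⁻¹ is Lipschitz with constant at most L^{d−1}; that is, |x − y| ≤ L^{d−1} |φ(x) − φ(y)| for all x, y ∈ ℝ^d. -/
/-!
Almost everywhere `φ` is differentiable, `‖Dφ‖ ≤ L`, and `|det Dφ| = 1` (change of variables for
an injective measure-preserving map). The singular values of `Dφ` multiply to `1` and are all at
most `L`, so the smallest one is at least `L^{-(d-1)}`; hence `‖D(φ⁻¹)‖ = ‖(Dφ)⁻¹‖ ≤ L^{d-1}`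
almost everywhere. Finally, a Lipschitz map whose derivative is a.e. bounded by `M` is
`M`-Lipschitz: integrate along almost every translate of a segment and pass to the limit.
-/

open MeasureTheory Module
open scoped NNReal RealInnerProductSpace

namespace LinearMap

variable {E F : Type*} [NormedAddCommGroup E] [InnerProductSpace ℝ E] [FiniteDimensional ℝ E]
  [NormedAddCommGroup F] [InnerProductSpace ℝ F] [FiniteDimensional ℝ F]

theorem sq_singularValues_fin_eq_norm_sq (A : E →ₗ[ℝ] F) {n : ℕ} (hn : finrank ℝ E = n)
    (i : Fin n) :
    A.singularValues i ^ 2 = ‖A (A.isSymmetric_adjoint_comp_self.eigenvectorBasis hn i)‖ ^ 2 := by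
  rw [A.sq_singularValues_fin hn, ← real_inner_self_eq_norm_sq, ← adjoint_inner_right,
    ← comp_apply, A.isSymmetric_adjoint_comp_self.apply_eigenvectorBasis, real_inner_smul_right,
    real_inner_self_eq_norm_sq, (OrthonormalBasis.orthonormal _).1 i]
  simp

theorem norm_apply_sq_eq_sum (A : E →ₗ[ℝ] F) {n : ℕ} (hn : finrank ℝ E = n) (z : E) :
    ‖A z‖ ^ 2 = ∑ i : Fin n, A.singularValues i ^ 2 *
      (A.isSymmetric_adjoint_comp_self.eigenvectorBasis hn).repr z i ^ 2 := by
  set hT := A.isSymmetric_adjoint_comp_self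
  rw [← real_inner_self_eq_norm_sq, ← adjoint_inner_right, ← comp_apply,
    ← (hT.eigenvectorBasis hn).repr.inner_map_map, PiLp.inner_apply]
  refine Finset.sum_congr rfl fun i _ => ?_
  rw [hT.eigenvectorBasis_apply_self_apply hn, A.sq_singularValues_fin hn]
  simp only [RCLike.inner_apply, conj_trivial, RCLike.ofReal_real_eq_id, id_eq]
  ring

theorem singularValues_finrank_sub_one_mul_norm_le (A : E →ₗ[ℝ] F) (z : E) :
    A.singularValues (finrank ℝ E - 1) * ‖z‖ ≤ ‖A z‖ := by
  set b := A.isSymmetric_adjoint_comp_self.eigenvectorBasis rfl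
  refine le_of_pow_le_pow_left₀ two_ne_zero (norm_nonneg _) ?_
  rw [mul_pow, A.norm_apply_sq_eq_sum rfl, ← b.repr.norm_map, EuclideanSpace.norm_sq_eq,
    Finset.mul_sum]
  refine Finset.sum_le_sum fun i _ => ?_
  rw [Real.norm_eq_abs, sq_abs]
  gcongr
  · exact A.singularValues_nonneg _
  · exact A.singularValues_antitone (Nat.le_sub_one_of_lt i.isLt)

end LinearMap

namespace ContinuousLinearMap

variable {E F : Type*} [NormedAddCommGroup E] [InnerProductSpace ℝ E] [FiniteDimensional ℝ E]
  [NormedAddCommGroup F] [InnerProductSpace ℝ F] [FiniteDimensional ℝ F]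

theorem singularValues_le_opNorm (A : E →L[ℝ] F) (i : ℕ) :
    (A : E →ₗ[ℝ] F).singularValues i ≤ ‖A‖ := by
  rcases lt_or_ge i (finrank ℝ E) with hi | hi
  · refine le_of_pow_le_pow_left₀ two_ne_zero (norm_nonneg _) ?_
    rw [LinearMap.sq_singularValues_fin_eq_norm_sq _ rfl ⟨i, hi⟩]
    gcongr
    exact (A.le_opNorm _).trans_eq (by rw [OrthonormalBasis.norm_eq_one, mul_one])
  · rw [LinearMap.singularValues_of_finrank_le _ hi]
    exact norm_nonneg A

theorem abs_det_mul_norm_le (A : E →L[ℝ] E) (z : E) :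
    |A.det| * ‖z‖ ≤ ‖A‖ ^ (finrank ℝ E - 1) * ‖A z‖ := by
  set σ := (A : E →ₗ[ℝ] E).singularValues
  have hdet : |A.det| = ∏ i ∈ Finset.range (finrank ℝ E), σ i := by
    rw [← LinearMap.normDet_eq_abs_det, LinearMap.normDet_eq_prod_singularValues]
  rcases Nat.eq_zero_or_eq_succ_pred (finrank ℝ E) with hn | hn
  · have : Subsingleton E := finrank_zero_iff.mp hn
    simp [Subsingleton.elim z 0]
  rw [hdet, hn, Finset.prod_range_succ, Nat.succ_sub_one, mul_assoc]
  gcongr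
  · exact mul_nonneg (A.toLinearMap.singularValues_nonneg _) (norm_nonneg z)
  · calc ∏ i ∈ Finset.range (finrank ℝ E).pred, σ i
        ≤ ∏ _i ∈ Finset.range (finrank ℝ E).pred, ‖A‖ :=
          Finset.prod_le_prod (fun i _ => A.toLinearMap.singularValues_nonneg i)
            fun i _ => A.singularValues_le_opNorm i
      _ = ‖A‖ ^ (finrank ℝ E).pred := by rw [Finset.prod_const, Finset.card_range]
  · exact A.toLinearMap.singularValues_finrank_sub_one_mul_norm_le z

theorem opNorm_le_pow_of_comp_eq_id {A B : E →L[ℝ] E} (hAB : A.comp B = .id ℝ E)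
    (hdet : |A.det| = 1) : ‖B‖ ≤ ‖A‖ ^ (finrank ℝ E - 1) :=
  B.opNorm_le_bound (by positivity) fun w => by
    simpa [hdet, ← comp_apply, hAB] using A.abs_det_mul_norm_le (B w)

end ContinuousLinearMap

theorem norm_fderiv_le_of_rightInverse {E : Type*} [NormedAddCommGroup E] [InnerProductSpace ℝ E]
    [FiniteDimensional ℝ E] {φ g : E → E} (hφg : Function.RightInverse g φ) {p : E}
    (hφ : DifferentiableAt ℝ φ (g p)) (hg : DifferentiableAt ℝ g p)
    (hJ : |(fderiv ℝ φ (g p)).det| = 1) :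
    ‖fderiv ℝ g p‖ ≤ ‖fderiv ℝ φ (g p)‖ ^ (finrank ℝ E - 1) := by
  have hcomp := hφ.hasFDerivAt.comp p hg.hasFDerivAt
  rw [hφg.comp_eq_id] at hcomp
  exact ContinuousLinearMap.opNorm_le_pow_of_comp_eq_id (hcomp.unique (hasFDerivAt_id p)) hJ

namespace MeasureTheory.MeasurePreserving

theorem of_leftInverse {α β : Type*} [MeasurableSpace α] [MeasurableSpace β] {μ : Measure α}
    {ν : Measure β} {f : α → β} {g : β → α} (hf : MeasurePreserving f μ ν) (hg : Measurable g)
    (hgf : Function.LeftInverse g f) : MeasurePreserving g ν μ := by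
  have := (hgf.comp_eq_id ▸ MeasurePreserving.id μ).map_of_comp hg hf.measurable
  rwa [hf.map_eq] at this

variable {E : Type*} [NormedAddCommGroup E] [NormedSpace ℝ E] [FiniteDimensional ℝ E]
  [MeasurableSpace E] [BorelSpace E] {μ : Measure E} [μ.IsAddHaarMeasure]

theorem ae_abs_det_fderiv_eq_one {f : E → E} (hf : MeasurePreserving f μ μ)
    (hinj : Function.Injective f) (hdiff : ∀ᵐ x ∂μ, DifferentiableAt ℝ f x) :
    ∀ᵐ x ∂μ, |(fderiv ℝ f x).det| = 1 := by
  set s := {x | DifferentiableAt ℝ f x}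
  have hs : MeasurableSet s := measurableSet_of_differentiableAt ℝ f
  have hJ : Measurable fun x => ENNReal.ofReal |(fderiv ℝ f x).det| :=
    ENNReal.measurable_ofReal.comp <|
      (ContinuousLinearMap.continuous_det.measurable.comp (measurable_fderiv ℝ f)).abs
  have hJ_eq : ∀ t, MeasurableSet t → μ.restrict s t < ⊤ →
      ∫⁻ x in t, ENNReal.ofReal |(fderiv ℝ f x).det| ∂μ.restrict s =
        ∫⁻ x in t, 1 ∂μ.restrict s := by
    intro t ht _
    have hts : MeasurableSet (t ∩ s) := ht.inter hs
    have himage : μ (f '' (t ∩ s)) = μ (t ∩ s) := by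
      rw [← hf.measure_preimage
        (hts.image_of_measurable_injOn hf.measurable hinj.injOn).nullMeasurableSet,
        Set.preimage_image_eq _ hinj]
    rw [Measure.restrict_restrict ht, setLIntegral_one, ← himage]
    simpa using (lintegral_image_eq_lintegral_abs_det_fderiv_mul μ hts
      (fun x hx => hx.2.hasFDerivAt.hasFDerivWithinAt) hinj.injOn 1).symm
  have hJ_ae := (ae_restrict_iff' hs).mp
    (ae_eq_of_forall_setLIntegral_eq_of_sigmaFinite hJ measurable_const hJ_eq)
  filter_upwards [hJ_ae, hdiff] with x hx hdx
  simpa using hx hdx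

end MeasureTheory.MeasurePreserving

theorem MeasureTheory.Measure.ae_ae_add_of_ae {G α : Type*} [AddGroup G] [MeasurableSpace G]
    [MeasurableAdd₂ G] {μ : Measure G} [μ.IsAddLeftInvariant] [SFinite μ]
    [MeasurableSpace α] {ν : Measure α} [SFinite ν]
    {p : G → Prop} (hp : MeasurableSet {x | p x}) (h : ∀ᵐ x ∂μ, p x)
    {c : α → G} (hc : Measurable c) : ∀ᵐ z ∂μ, ∀ᵐ t ∂ν, p (c t + z) := by
  refine (ae_ae_comm ?_).mp (ae_of_all _ fun t => ?_)
  · exact hp.preimage ((hc.comp measurable_fst).add measurable_snd)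
  · exact (measurePreserving_add_left μ (c t)).quasiMeasurePreserving.ae h

theorem LipschitzWith.sub_le_mul_of_ae_abs_deriv_le {f : ℝ → ℝ} {K : ℝ≥0}
    (hf : LipschitzWith K f) {C : ℝ} (hC : ∀ᵐ t, |deriv f t| ≤ C) {a b : ℝ} (hab : a ≤ b) :
    f b - f a ≤ C * (b - a) := by
  have hac := (hf.lipschitzOnWith (s := Set.uIcc a b)).absolutelyContinuousOnInterval
  rw [← hac.integral_deriv_eq_sub, mul_comm, ← smul_eq_mul, ← intervalIntegral.integral_const]
  exact intervalIntegral.integral_mono_ae hab hac.intervalIntegrable_deriv intervalIntegrable_const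
    (hC.mono fun t ht => (le_abs_self _).trans ht)

namespace LipschitzWith

variable {E F : Type*} [NormedAddCommGroup E] [NormedSpace ℝ E]
  [NormedAddCommGroup F] [InnerProductSpace ℝ F]

/-- Test the increment `y = g (x + w) - g x` against itself: `t ↦ ⟪y, g (x + t • w)⟫` is a real
Lipschitz function, so its increment on `[0, 1]` is the integral of its a.e. derivative. -/
theorem norm_sub_le_of_ae_norm_fderiv_le_on_line {g : E → F} {K : ℝ≥0}
    (hg : LipschitzWith K g) {M : ℝ≥0} {x w : E}
    (h : ∀ᵐ t : ℝ, DifferentiableAt ℝ g (x + t • w) ∧ ‖fderiv ℝ g (x + t • w)‖ ≤ M) :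
    ‖g (x + w) - g x‖ ≤ M * ‖w‖ := by
  set y := g (x + w) - g x
  set f : ℝ → ℝ := fun t => ⟪y, g (x + t • w)⟫
  have hline : ∀ t, HasDerivAt (fun t : ℝ => x + t • w) w t := fun t => by
    simpa using ((hasDerivAt_id t).smul_const w).const_add x
  have hf : LipschitzWith _ f := (innerSL ℝ y).lipschitz.comp <| hg.comp <|
    (IsometryEquiv.addLeft x).isometry.lipschitz.comp
      (ContinuousLinearMap.toSpanSingleton ℝ w).lipschitz
  have hf' : ∀ᵐ t, |deriv f t| ≤ ‖y‖ * (M * ‖w‖) := by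
    filter_upwards [h] with t ⟨hdiff, hbound⟩
    have hderiv : HasDerivAt f ⟪y, fderiv ℝ g (x + t • w) w⟫ t :=
      (hasDerivAt_const t y).inner ℝ (hdiff.hasFDerivAt.comp_hasDerivAt t (hline t)) |>.congr_deriv
        (by simp)
    rw [hderiv.deriv]
    calc |⟪y, fderiv ℝ g (x + t • w) w⟫| ≤ ‖y‖ * ‖fderiv ℝ g (x + t • w) w‖ :=
          abs_real_inner_le_norm _ _
      _ ≤ ‖y‖ * (M * ‖w‖) := by gcongr; exact (ContinuousLinearMap.le_opNorm _ _).trans (by gcongr)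
  have hy : ‖y‖ ^ 2 ≤ ‖y‖ * (M * ‖w‖) := by
    have := hf.sub_le_mul_of_ae_abs_deriv_le hf' zero_le_one
    simpa [f, y, ← inner_sub_right, real_inner_self_eq_norm_sq] using this
  rcases (norm_nonneg y).eq_or_lt with hy0 | hy0
  · rw [← hy0]; positivity
  · exact le_of_mul_le_mul_left (by rwa [← sq]) hy0

theorem of_ae_norm_fderiv_le [FiniteDimensional ℝ E] [FiniteDimensional ℝ F]
    [MeasurableSpace E] [BorelSpace E] (μ : Measure E) [μ.IsAddHaarMeasure] {g : E → F} {K : ℝ≥0}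
    (hg : LipschitzWith K g) {M : ℝ≥0} (h : ∀ᵐ x ∂μ, ‖fderiv ℝ g x‖ ≤ M) :
    LipschitzWith M g := by
  refine LipschitzWith.of_dist_le_mul fun u v => ?_
  set p := fun x => DifferentiableAt ℝ g x ∧ ‖fderiv ℝ g x‖ ≤ M
  have hp : MeasurableSet {x | p x} := (measurableSet_of_differentiableAt ℝ g).inter
    (measurableSet_le (measurable_fderiv ℝ g).norm measurable_const)
  have htranslates : ∀ᵐ z ∂μ, dist (g (u + z)) (g (v + z)) ≤ M * dist u v := by
    have hline : Measurable fun t : ℝ => v + t • (u - v) := by fun_prop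
    filter_upwards [Measure.ae_ae_add_of_ae (ν := volume) hp (hg.ae_differentiableAt.and h) hline]
      with z hz
    have := hg.norm_sub_le_of_ae_norm_fderiv_le_on_line (x := v + z) (w := u - v)
      (by simpa only [add_right_comm] using hz)
    rwa [show v + z + (u - v) = u + z by abel, ← dist_eq_norm, ← dist_eq_norm] at this
  have hclosed : IsClosed {z | dist (g (u + z)) (g (v + z)) ≤ M * dist u v} :=
    have := hg.continuous
    isClosed_le (by fun_prop) continuous_const
  have huniv := hclosed.ae_eq_univ_iff_eq.mp (ae_eq_univ.mpr htranslates)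
  simpa using Set.eq_univ_iff_forall.mp huniv 0

end LipschitzWith

theorem stmt12_general (d : ℕ) (hd : 1 ≤ d)
    (φ : EuclideanSpace ℝ (Fin d) → EuclideanSpace ℝ (Fin d))
    (hbij : Function.Bijective φ)
    (hlipinv : ∃ A : NNReal, LipschitzWith A (Function.invFun φ))
    (hmp : MeasurePreserving φ volume volume)
    (L : ℝ)
    (hL : ∀ x y, dist (φ x) (φ y) ≤ L * dist x y) :
    ∀ x y : EuclideanSpace ℝ (Fin d), dist x y ≤ L ^ (d - 1) * dist (φ x) (φ y) := by
  obtain ⟨K, hg⟩ := hlipinv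
  set g := Function.invFun φ
  have hgφ : Function.LeftInverse g φ := Function.leftInverse_invFun hbij.1
  have hφg : Function.RightInverse g φ := Function.rightInverse_invFun hbij.2
  have hL0 : 0 ≤ L := by
    have : Nontrivial (EuclideanSpace ℝ (Fin d)) :=
      Module.nontrivial_of_finrank_pos (by rw [finrank_euclideanSpace_fin]; omega)
    obtain ⟨x, y, hxy⟩ := exists_pair_ne (EuclideanSpace ℝ (Fin d))
    exact nonneg_of_mul_nonneg_left (dist_nonneg.trans (hL x y)) (dist_pos.mpr hxy)
  have hφ : LipschitzWith L.toNNReal φ :=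
    .of_dist_le_mul fun x y => by simpa [Real.coe_toNNReal _ hL0] using hL x y
  have hgmp := (hmp.of_leftInverse hg.continuous.measurable hgφ).quasiMeasurePreserving
  have hJ := hmp.ae_abs_det_fderiv_eq_one hbij.1 hφ.ae_differentiableAt
  have hDg : ∀ᵐ p, ‖fderiv ℝ g p‖ ≤ ↑(L.toNNReal ^ (d - 1)) := by
    filter_upwards [hgmp.ae hJ, hgmp.ae hφ.ae_differentiableAt, hg.ae_differentiableAt]
      with p hJp hφp hgp
    calc ‖fderiv ℝ g p‖ ≤ ‖fderiv ℝ φ (g p)‖ ^ (d - 1) := by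
          simpa using norm_fderiv_le_of_rightInverse hφg hφp hgp hJp
      _ ≤ _ := by push_cast; gcongr; exact hφp.hasFDerivAt.le_of_lipschitz hφ
  intro x y
  simpa [hgφ x, hgφ y, hL0] using (hg.of_ae_norm_fderiv_le volume hDg).dist_le_mul (φ x) (φ y)

/-- Let `d ≥ 1` and `φ : ℝ^d → ℝ^d` a bi-Lipschitz homeomorphism preserving Lebesgue measure,
with (least) Lipschitz constant `L`. Then `φ⁻¹` is Lipschitz with constant at most `L^{d−1}`:
`|x − y| ≤ L^{d−1} |φ(x) − φ(y)|` for all `x, y`. -/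
theorem stmt12 (d : ℕ) (hd : 1 ≤ d)
    (φ : EuclideanSpace ℝ (Fin d) → EuclideanSpace ℝ (Fin d))
    (hbij : Function.Bijective φ)
    (hlipinv : ∃ A : NNReal, LipschitzWith A (Function.invFun φ))
    (hmp : MeasurePreserving φ volume volume)
    (L : ℝ)
    (hL : ∀ x y, dist (φ x) (φ y) ≤ L * dist x y)
    (hLleast : ∀ L' : ℝ, (∀ x y, dist (φ x) (φ y) ≤ L' * dist x y) → L ≤ L') :
    ∀ x y : EuclideanSpace ℝ (Fin d), dist x y ≤ L ^ (d - 1) * dist (φ x) (φ y) :=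
  stmt12_general d hd φ hbij hlipinv hmp L hL
end

section
/- Let d ≥ 1, p ∈ [1,∞), L ≥ 0 and t ≥ 0. Let ψ : ℝ^d → ℝ^d be a homeomorphism preserving Lebesgue measure and satisfying e^{−Lt}|x − y| ≤ |ψ(x) − ψ(y)| ≤ e^{Lt}|x − y| for all x, y ∈ ℝ^d. There is a constant C depending only on d and p such that: if u₀ ∈ L^p_loc(ℝ^d) satisfies (|B|⁻¹ ∫_B |u₀ − av_B u₀|^p)^{1/p} ≤ N for every ball B ⊂ ℝ^d, then the function u := u₀ ∘ ψ⁻¹ satisfies (|B|⁻¹ ∫_B |u − av_B u|^p)^{1/p} ≤ C·(1 + L·t)·N for every ball B ⊂ ℝ^d. -/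
/-!
Let `K = e^{Lt}` and `ε = r / K`. Comparing `u₀` on `ψ⁻¹(B(x, r))` with its mean on an enclosing
ball of radius `≈ K r` would cost a factor `K^d`. Instead, cover `ψ⁻¹(B(x, r))` by the balls
`B(i, 2ε)` centred at a maximal `ε`-separated subset of it: the balls `B(i, ε / 2)` are disjoint
and `ψ` maps them into `B(x, 2r)`, so since `ψ` preserves measure the covering balls have total
measure `≲ |B(x, r)|`. On each of them `u₀` is within `≲ N` of its own mean in `Lᵖ`, and that
mean is within `≲ (1 + Lt) N` of the mean `c` of `u₀` on one fixed ball of radius `≈ K r`: the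
two are joined by `O(log K) = O(1 + Lt)` balls of doubling radii, along which consecutive means
differ by `≲ N`. Hence the `p`-th power mean of `|u - c|` over `B(x, r)`, which is that of
`|u₀ - c|` over `ψ⁻¹(B(x, r))`, is `≲ ((1 + Lt) N) ^ p`, and replacing `c` by the mean of `u`
costs a factor `2`.
-/

open Metric MeasureTheory Set Module
open scoped ENNReal NNReal

theorem Real.rpow_add_le_mul_rpow_add_rpow {a b p : ℝ} (ha : 0 ≤ a) (hb : 0 ≤ b) (hp : 1 ≤ p) :
    (a + b) ^ p ≤ 2 ^ (p - 1) * (a ^ p + b ^ p) := by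
  exact_mod_cast NNReal.rpow_add_le_mul_rpow_add_rpow ⟨a, ha⟩ ⟨b, hb⟩ hp

theorem Real.exp_le_two_pow_two_mul_ceil (a : ℝ) : Real.exp a ≤ 2 ^ (2 * ⌈a⌉₊) :=
  calc Real.exp a ≤ Real.exp (⌈a⌉₊ * 1) := Real.exp_le_exp.2 (by simpa using Nat.le_ceil a)
    _ = Real.exp 1 ^ ⌈a⌉₊ := Real.exp_nat_mul 1 _
    _ ≤ 4 ^ ⌈a⌉₊ := by gcongr; linarith [Real.exp_one_lt_d9]
    _ = 2 ^ (2 * ⌈a⌉₊) := by rw [pow_mul]; norm_num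

section Averages

variable {α : Type*} [MeasurableSpace α] {μ : Measure α} {p : ℝ} {f : α → ℝ}

theorem average_nonneg (hf : ∀ x, 0 ≤ f x) : 0 ≤ ⨍ x, f x ∂μ :=
  integral_nonneg hf

variable [IsFiniteMeasure μ]

theorem MeasureTheory.MemLp.integrable_abs_sub_rpow (hf : MemLp f (.ofReal p) μ) (hp : 0 < p)
    (c : ℝ) : Integrable (fun x ↦ |f x - c| ^ p) μ := by
  simpa [ENNReal.toReal_ofReal hp.le, Real.norm_eq_abs] using
    (hf.sub (memLp_const c)).integrable_norm_rpow (by simpa using hp) ENNReal.ofReal_ne_top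

variable [NeZero μ]

theorem average_add_const (hf : Integrable f μ) (c : ℝ) :
    ⨍ x, (f x + c) ∂μ = ⨍ x, f x ∂μ + c := by
  simp only [average_eq']
  rw [integral_add hf.to_average (integrable_const c), integral_const, probReal_univ, one_smul]

theorem abs_average_sub_rpow_le (hp : 1 ≤ p) (hf : MemLp f (.ofReal p) μ) (c : ℝ) :
    |⨍ x, f x ∂μ - c| ^ p ≤ ⨍ x, |f x - c| ^ p ∂μ := by
  have hp0 : 0 < p := one_pos.trans_le hp
  have hf1 : Integrable f μ :=
    memLp_one_iff_integrable.1 (hf.mono_exponent (by simpa using ENNReal.one_le_ofReal.2 hp))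
  calc |⨍ x, f x ∂μ - c| ^ p = |⨍ x, (f x + -c) ∂μ| ^ p := by
        rw [average_add_const hf1, sub_eq_add_neg]
    _ ≤ (⨍ x, |f x - c| ∂μ) ^ p := by
        gcongr
        simpa only [average_eq', ← sub_eq_add_neg] using abs_integral_le_integral_abs
    _ ≤ ⨍ x, |f x - c| ^ p ∂μ :=
        (convexOn_rpow hp).map_average_le (continuousOn_id.rpow_const fun _ _ ↦ Or.inr hp0.le)
          isClosed_Ici (.of_forall fun _ ↦ mem_Ici.2 (abs_nonneg _))
          (hf1.sub (integrable_const c)).abs (hf.integrable_abs_sub_rpow hp0 c)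

theorem average_abs_sub_rpow_le (hp : 1 ≤ p) (hf : MemLp f (.ofReal p) μ) (a c : ℝ) :
    ⨍ x, |f x - c| ^ p ∂μ ≤ 2 ^ (p - 1) * (⨍ x, |f x - a| ^ p ∂μ + |a - c| ^ p) := by
  have hp0 : 0 < p := one_pos.trans_le hp
  have ha := hf.integrable_abs_sub_rpow hp0 a
  calc ⨍ x, |f x - c| ^ p ∂μ ≤ ⨍ x, 2 ^ (p - 1) * (|f x - a| ^ p + |a - c| ^ p) ∂μ := by
        refine integral_mono (hf.integrable_abs_sub_rpow hp0 c).to_average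
          ((ha.add (integrable_const _)).const_mul _).to_average fun x ↦ ?_
        calc |f x - c| ^ p ≤ (|f x - a| + |a - c|) ^ p := by gcongr; exact abs_sub_le _ _ _
          _ ≤ _ := Real.rpow_add_le_mul_rpow_add_rpow (abs_nonneg _) (abs_nonneg _) hp
    _ = 2 ^ (p - 1) * (⨍ x, |f x - a| ^ p ∂μ + |a - c| ^ p) := by
        rw [← average_add_const ha]
        simp only [average_eq', integral_const_mul]

theorem average_abs_sub_average_rpow_le (hp : 1 ≤ p) (hf : MemLp f (.ofReal p) μ) (c : ℝ) :
    ⨍ x, |f x - ⨍ y, f y ∂μ| ^ p ∂μ ≤ 2 ^ p * ⨍ x, |f x - c| ^ p ∂μ := by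
  have hjensen : |c - ⨍ y, f y ∂μ| ^ p ≤ ⨍ x, |f x - c| ^ p ∂μ := by
    rw [abs_sub_comm]; exact abs_average_sub_rpow_le hp hf c
  calc ⨍ x, |f x - ⨍ y, f y ∂μ| ^ p ∂μ
      ≤ 2 ^ (p - 1) * (⨍ x, |f x - c| ^ p ∂μ + |c - ⨍ y, f y ∂μ| ^ p) :=
        average_abs_sub_rpow_le hp hf c _
    _ ≤ 2 ^ (p - 1) * (2 * ⨍ x, |f x - c| ^ p ∂μ) := by gcongr; linarith
    _ = 2 ^ p * ⨍ x, |f x - c| ^ p ∂μ := by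
        rw [← mul_assoc, ← Real.rpow_add_one two_ne_zero, sub_add_cancel]

end Averages

theorem MeasureTheory.setIntegral_le_sum_of_subset_biUnion {α ι : Type*} [MeasurableSpace α]
    {μ : Measure α} {g : α → ℝ} {S : Set α} {F : Finset ι} {t : ι → Set α}
    (hS : MeasurableSet S) (ht : ∀ i ∈ F, MeasurableSet (t i)) (hSt : S ⊆ ⋃ i ∈ F, t i)
    (hg : ∀ x, 0 ≤ g x) (hgt : ∀ i ∈ F, IntegrableOn g (t i) μ) :
    ∫ x in S, g x ∂μ ≤ ∑ i ∈ F, ∫ x in t i, g x ∂μ := by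
  have hind : ∀ i ∈ F, Integrable ((t i).indicator g) μ :=
    fun i hi ↦ (integrable_indicator_iff (ht i hi)).2 (hgt i hi)
  rw [← integral_indicator hS, Finset.sum_congr rfl fun i hi ↦ (integral_indicator (ht i hi)).symm,
    ← integral_finsetSum F hind]
  refine integral_mono_of_nonneg (.of_forall fun x ↦ indicator_nonneg (fun x _ ↦ hg x) x)
    (integrable_finsetSum F hind) (.of_forall fun x ↦ ?_)
  by_cases hx : x ∈ S
  · obtain ⟨i, hi, hxi⟩ := mem_iUnion₂.1 (hSt hx)
    calc S.indicator g x = (t i).indicator g x := by simp [hx, hxi]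
      _ ≤ ∑ j ∈ F, (t j).indicator g x :=
        Finset.single_le_sum (fun j _ ↦ indicator_nonneg (fun x _ ↦ hg x) x) hi
  · simpa [hx] using Finset.sum_nonneg fun j _ ↦ indicator_nonneg (fun x _ ↦ hg x) x

theorem MeasureTheory.setIntegral_le_sum_measureReal_mul_of_subset_biUnion {α ι : Type*}
    [MeasurableSpace α] {μ : Measure α} {g : α → ℝ} {S : Set α} {F : Finset ι} {t : ι → Set α}
    (hS : MeasurableSet S) (ht : ∀ i ∈ F, MeasurableSet (t i)) (hSt : S ⊆ ⋃ i ∈ F, t i)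
    (hg : ∀ x, 0 ≤ g x) (hgt : ∀ i ∈ F, IntegrableOn g (t i) μ) (htμ : ∀ i ∈ F, μ (t i) ≠ ∞)
    {A : ℝ} (hA : ∀ i ∈ F, ⨍ x in t i, g x ∂μ ≤ A) :
    ∫ x in S, g x ∂μ ≤ (∑ i ∈ F, μ.real (t i)) * A :=
  calc ∫ x in S, g x ∂μ ≤ ∑ i ∈ F, ∫ x in t i, g x ∂μ :=
        setIntegral_le_sum_of_subset_biUnion hS ht hSt hg hgt
    _ = ∑ i ∈ F, μ.real (t i) * ⨍ x in t i, g x ∂μ :=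
        Finset.sum_congr rfl fun i hi ↦ (measure_smul_setAverage _ (htμ i hi)).symm
    _ ≤ (∑ i ∈ F, μ.real (t i)) * A := by
        rw [Finset.sum_mul]
        exact Finset.sum_le_sum fun i hi ↦ by gcongr; exact hA i hi

theorem Bornology.IsBounded.packingNumber_ne_top {X : Type*} [PseudoMetricSpace X]
    [ProperSpace X] {A : Set X} (hA : Bornology.IsBounded A) {ε : ℝ≥0} (hε : ε ≠ 0) :
    packingNumber ε A ≠ ⊤ := by
  obtain ⟨C, -, hC, hcover⟩ :=
    exists_finite_isCover_of_isCompact_closure (ε := ε / 2) (by simpa using hε)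
      hA.isCompact_closure
  have := packingNumber_two_mul_le_externalCoveringNumber (ε / 2) A
  rw [mul_div_cancel₀ _ two_ne_zero] at this
  exact ne_top_of_le_ne_top (hC.encard_lt_top.ne)
    (this.trans hcover.externalCoveringNumber_le_encard)

theorem Bornology.IsBounded.exists_finset_subset_biUnion_ball {X : Type*} [MetricSpace X]
    [ProperSpace X] {A : Set X} (hA : Bornology.IsBounded A) {ε : ℝ} (hε : 0 < ε) :
    ∃ F : Finset X, ↑F ⊆ A ∧ A ⊆ ⋃ i ∈ F, ball i (2 * ε) ∧
      (F : Set X).PairwiseDisjoint fun i ↦ ball i (ε / 2) := by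
  have htop := hA.packingNumber_ne_top (Real.toNNReal_pos.2 hε).ne'
  have hfin : (maximalSeparatedSet ε.toNNReal A).Finite := by
    rw [← Set.encard_ne_top_iff, encard_maximalSeparatedSet htop]; exact htop
  refine ⟨hfin.toFinset, by simpa using maximalSeparatedSet_subset, fun x hx ↦ ?_, ?_⟩
  · obtain ⟨i, hi, hxi⟩ := isCover_maximalSeparatedSet htop hx
    have : dist x i ≤ ε := by
      have hxi : edist x i ≤ ENNReal.ofReal ε := hxi
      rw [edist_dist] at hxi; exact (ENNReal.ofReal_le_ofReal_iff hε.le).1 hxi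
    exact mem_iUnion₂.2 ⟨i, by simpa using hi, mem_ball.2 (by linarith)⟩
  · intro i hi j hj hij
    have hsep := isSeparated_maximalSeparatedSet (ε := ε.toNNReal) (A := A) (by simpa using hi)
      (by simpa using hj) hij
    have : ε < dist i j := by
      have hsep : ENNReal.ofReal ε < edist i j := hsep
      rw [edist_dist] at hsep; exact (ENNReal.ofReal_lt_ofReal_iff_of_nonneg hε.le).1 hsep
    exact ball_disjoint_ball (by linarith)

theorem card_mul_measure_ball_le_of_pairwiseDisjoint {E : Type*} [NormedAddCommGroup E]
    [MeasurableSpace E] [BorelSpace E] {μ : Measure E} [μ.IsAddHaarMeasure] {F : Finset E}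
    {δ : ℝ} {T : Set E}
    (hdisj : (F : Set E).PairwiseDisjoint fun i ↦ ball i δ) (hT : ∀ i ∈ F, ball i δ ⊆ T) :
    F.card * μ (ball 0 δ) ≤ μ T :=
  calc F.card * μ (ball 0 δ) = ∑ i ∈ F, μ (ball i δ) := by
        simp [Measure.addHaar_ball_center μ _ δ]
    _ = μ (⋃ i ∈ F, ball i δ) := (measure_biUnion_finset hdisj fun _ _ ↦ measurableSet_ball).symm
    _ ≤ μ T := measure_mono (iUnion₂_subset hT)

theorem MeasureTheory.MeasurePreserving.setAverage_invFun {α β G : Type*} [MeasurableSpace α]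
    [MeasurableSpace β] [Nonempty α] [NormedAddCommGroup G] [NormedSpace ℝ G] {μa : Measure α}
    {μb : Measure β} {f : α → β} (hf : MeasurePreserving f μa μb) (he : MeasurableEmbedding f)
    (g : α → G) (s : Set β) :
    ⨍ y in s, g (Function.invFun f y) ∂μb = ⨍ x in f ⁻¹' s, g x ∂μa := by
  have h := hf.restrict_preimage_emb he s
  have hvol := h.measureReal_preimage (s := univ) nullMeasurableSet_univ
  rw [preimage_univ] at hvol
  rw [average_eq, average_eq, hvol, ← h.integral_comp he]
  simp only [Function.leftInverse_invFun he.injective _]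

section Balls

instance {X : Type*} [PseudoMetricSpace X] [ProperSpace X] [MeasurableSpace X] {μ : Measure X}
    [IsFiniteMeasureOnCompacts μ] (x : X) (r : ℝ) : IsFiniteMeasure (μ.restrict (ball x r)) :=
  isFiniteMeasure_restrict.2 measure_ball_lt_top.ne

theorem neZero_restrict_ball {X : Type*} [PseudoMetricSpace X] [MeasurableSpace X]
    [OpensMeasurableSpace X] (μ : Measure X) [μ.IsOpenPosMeasure] (x : X) {r : ℝ} (hr : 0 < r) :
    NeZero (μ.restrict (ball x r)) :=
  ⟨by simpa [Measure.restrict_eq_zero] using (measure_ball_pos μ x hr).ne'⟩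

variable {E : Type*} [NormedAddCommGroup E] [NormedSpace ℝ E] [FiniteDimensional ℝ E]
  [MeasurableSpace E] [BorelSpace E] {μ : Measure E} [μ.IsAddHaarMeasure]
  {p N : ℝ} {u : E → ℝ}

theorem MeasureTheory.Measure.addHaar_real_ball_mul_of_pos (x y : E) {a : ℝ} (ha : 0 < a) (r : ℝ) :
    μ.real (ball x (a * r)) = a ^ finrank ℝ E * μ.real (ball y r) := by
  rw [measureReal_def, Measure.addHaar_ball_mul_of_pos μ x ha, ENNReal.toReal_mul,
    ENNReal.toReal_ofReal (by positivity), ← Measure.addHaar_ball_center μ y, measureReal_def]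

theorem abs_setAverage_sub_setAverage_le_of_ball_subset (hp : 1 ≤ p) (hN₀ : 0 ≤ N)
    (hu : ∀ x r, 0 < r → MemLp u (.ofReal p) (μ.restrict (ball x r)))
    (hN : ∀ x r, 0 < r → ⨍ y in ball x r, |u y - ⨍ z in ball x r, u z ∂μ| ^ p ∂μ ≤ N ^ p)
    {z w : E} {s : ℝ} (hs : 0 < s) (hsub : ball z s ⊆ ball w (2 * s)) :
    |⨍ y in ball z s, u y ∂μ - ⨍ y in ball w (2 * s), u y ∂μ| ≤ 2 ^ finrank ℝ E * N := by
  have hp0 : 0 < p := one_pos.trans_le hp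
  have := neZero_restrict_ball μ z hs
  set c := ⨍ y in ball w (2 * s), u y ∂μ
  have hvol : μ.real (ball w (2 * s)) = 2 ^ finrank ℝ E * μ.real (ball z s) :=
    Measure.addHaar_real_ball_mul_of_pos w z two_pos s
  have hpow : |⨍ y in ball z s, u y ∂μ - c| ^ p ≤ (2 ^ finrank ℝ E * N) ^ p :=
    calc |⨍ y in ball z s, u y ∂μ - c| ^ p ≤ ⨍ y in ball z s, |u y - c| ^ p ∂μ :=
          abs_average_sub_rpow_le hp (hu z s hs) c
      _ = (μ.real (ball z s))⁻¹ * ∫ y in ball z s, |u y - c| ^ p ∂μ := by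
          rw [setAverage_eq, smul_eq_mul]
      _ ≤ (μ.real (ball z s))⁻¹ * ∫ y in ball w (2 * s), |u y - c| ^ p ∂μ :=
          mul_le_mul_of_nonneg_left (setIntegral_mono_set
            ((hu w _ (by positivity)).integrable_abs_sub_rpow hp0 c)
            (.of_forall fun _ ↦ by positivity) hsub.eventuallyLE) (by positivity)
      _ = 2 ^ finrank ℝ E * ⨍ y in ball w (2 * s), |u y - c| ^ p ∂μ := by
          rw [setAverage_eq, smul_eq_mul, hvol]
          field_simp
      _ ≤ 2 ^ finrank ℝ E * N ^ p := by gcongr; exact hN w _ (by positivity)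
      _ ≤ (2 ^ finrank ℝ E * N) ^ p := by
          rw [Real.mul_rpow (by positivity) hN₀]
          gcongr
          exact Real.self_le_rpow_of_one_le (one_le_pow₀ one_le_two) hp
  exact (Real.rpow_le_rpow_iff (abs_nonneg _) (by positivity) hp0).1 hpow

theorem abs_setAverage_sub_setAverage_two_pow_le (hp : 1 ≤ p) (hN₀ : 0 ≤ N)
    (hu : ∀ x r, 0 < r → MemLp u (.ofReal p) (μ.restrict (ball x r)))
    (hN : ∀ x r, 0 < r → ⨍ y in ball x r, |u y - ⨍ z in ball x r, u z ∂μ| ^ p ∂μ ≤ N ^ p)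
    (z : E) {s : ℝ} (hs : 0 < s) (n : ℕ) :
    |⨍ y in ball z s, u y ∂μ - ⨍ y in ball z (2 ^ n * s), u y ∂μ| ≤
      n * 2 ^ finrank ℝ E * N := by
  induction n with
  | zero => simp
  | succ n ih =>
    have hstep := abs_setAverage_sub_setAverage_le_of_ball_subset hp hN₀ hu hN
      (z := z) (w := z) (s := 2 ^ n * s) (by positivity)
      (ball_subset_ball (by linarith [show (0 : ℝ) < 2 ^ n * s by positivity]))
    rw [← mul_assoc, ← pow_succ'] at hstep
    calc _ ≤ |⨍ y in ball z s, u y ∂μ - ⨍ y in ball z (2 ^ n * s), u y ∂μ| +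
          |⨍ y in ball z (2 ^ n * s), u y ∂μ - ⨍ y in ball z (2 ^ (n + 1) * s), u y ∂μ| :=
          abs_sub_le _ _ _
      _ ≤ n * 2 ^ finrank ℝ E * N + 2 ^ finrank ℝ E * N := add_le_add ih hstep
      _ = (n + 1 : ℕ) * 2 ^ finrank ℝ E * N := by push_cast; ring

theorem abs_setAverage_sub_setAverage_le_of_dist_lt (hp : 1 ≤ p) (hN₀ : 0 ≤ N)
    (hu : ∀ x r, 0 < r → MemLp u (.ofReal p) (μ.restrict (ball x r)))
    (hN : ∀ x r, 0 < r → ⨍ y in ball x r, |u y - ⨍ z in ball x r, u z ∂μ| ^ p ∂μ ≤ N ^ p)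
    {z w : E} {s : ℝ} (hs : 0 < s) {n : ℕ} (hzw : dist z w < 2 ^ n * s) :
    |⨍ y in ball z s, u y ∂μ - ⨍ y in ball w (2 ^ (n + 1) * s), u y ∂μ| ≤
      (n + 1) * 2 ^ finrank ℝ E * N := by
  have hlast := abs_setAverage_sub_setAverage_le_of_ball_subset hp hN₀ hu hN
    (z := z) (w := w) (s := 2 ^ n * s) (by positivity) (ball_subset_ball' (by linarith))
  rw [← mul_assoc, ← pow_succ'] at hlast
  calc _ ≤ |⨍ y in ball z s, u y ∂μ - ⨍ y in ball z (2 ^ n * s), u y ∂μ| +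
        |⨍ y in ball z (2 ^ n * s), u y ∂μ - ⨍ y in ball w (2 ^ (n + 1) * s), u y ∂μ| :=
        abs_sub_le _ _ _
    _ ≤ n * 2 ^ finrank ℝ E * N + 2 ^ finrank ℝ E * N :=
        add_le_add (abs_setAverage_sub_setAverage_two_pow_le hp hN₀ hu hN z hs n) hlast
    _ = (n + 1) * 2 ^ finrank ℝ E * N := by ring

theorem setAverage_abs_sub_rpow_le_of_abs_setAverage_sub_le (hp : 1 ≤ p)
    (hu : ∀ x r, 0 < r → MemLp u (.ofReal p) (μ.restrict (ball x r)))
    (hN : ∀ x r, 0 < r → ⨍ y in ball x r, |u y - ⨍ z in ball x r, u z ∂μ| ^ p ∂μ ≤ N ^ p)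
    {z : E} {s : ℝ} (hs : 0 < s) {c β : ℝ} (hN₀ : 0 ≤ N) (hNβ : N ≤ β)
    (hc : |⨍ y in ball z s, u y ∂μ - c| ≤ β) :
    ⨍ y in ball z s, |u y - c| ^ p ∂μ ≤ (2 * β) ^ p := by
  have := neZero_restrict_ball μ z hs
  have hp0 : 0 < p := one_pos.trans_le hp
  calc _ ≤ 2 ^ (p - 1) * (⨍ y in ball z s, |u y - ⨍ y in ball z s, u y ∂μ| ^ p ∂μ +
        |⨍ y in ball z s, u y ∂μ - c| ^ p) := average_abs_sub_rpow_le hp (hu z s hs) _ c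
    _ ≤ 2 ^ (p - 1) * (β ^ p + β ^ p) := by
        gcongr
        · exact (hN z s hs).trans (by gcongr)
    _ = (2 * β) ^ p := by
        rw [Real.mul_rpow zero_le_two (hN₀.trans hNβ), ← two_mul, ← mul_assoc,
          ← Real.rpow_add_one two_ne_zero, sub_add_cancel]

variable {ψ : E → E} {K : ℝ≥0}

theorem sum_measureReal_ball_le_of_subset_preimage (hψ : MeasurePreserving ψ μ μ)
    (hL : LipschitzWith K ψ) (hK : 0 < K) {x : E} {r : ℝ} (hr : 0 < r) {F : Finset E}
    (hF : ↑F ⊆ ψ ⁻¹' ball x r) (hdisj : (F : Set E).PairwiseDisjoint fun i ↦ ball i (r / K / 2)) :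
    ∑ i ∈ F, μ.real (ball i (2 * (r / K))) ≤ 8 ^ finrank ℝ E * μ.real (ball x r) := by
  set ε := r / K
  have hε : 0 < ε := div_pos hr (by exact_mod_cast hK)
  have hsub : ∀ i ∈ F, ball i (ε / 2) ⊆ ψ ⁻¹' ball x (2 * r) := by
    intro i hi z hz
    have hzi : dist (ψ z) (ψ i) ≤ r / 2 :=
      calc dist (ψ z) (ψ i) ≤ K * dist z i := hL.dist_le_mul z i
        _ ≤ K * (ε / 2) := by gcongr; exact (mem_ball.1 hz).le
        _ = r / 2 := by simp only [ε]; field_simp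
    have hix : dist (ψ i) x < r := hF hi
    exact mem_ball.2 (by linarith [dist_triangle (ψ z) (ψ i) x])
  have hcount := card_mul_measure_ball_le_of_pairwiseDisjoint (μ := μ) hdisj hsub
  rw [hψ.measure_preimage measurableSet_ball.nullMeasurableSet] at hcount
  have hcount' : F.card * μ.real (ball 0 (ε / 2)) ≤ μ.real (ball x (2 * r)) := by
    simpa [measureReal_def, ENNReal.toReal_mul] using
      ENNReal.toReal_mono measure_ball_lt_top.ne hcount
  calc ∑ i ∈ F, μ.real (ball i (2 * ε))
      = ∑ i ∈ F, 4 ^ finrank ℝ E * μ.real (ball (0 : E) (ε / 2)) := by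
        refine Finset.sum_congr rfl fun i _ ↦ ?_
        rw [← Measure.addHaar_real_ball_mul_of_pos i 0 four_pos]; ring_nf
    _ = 4 ^ finrank ℝ E * (F.card * μ.real (ball 0 (ε / 2))) := by
        rw [Finset.sum_const, nsmul_eq_mul]; ring
    _ ≤ 4 ^ finrank ℝ E * μ.real (ball x (2 * r)) := by gcongr
    _ = 8 ^ finrank ℝ E * μ.real (ball x r) := by
        rw [Measure.addHaar_real_ball_mul_of_pos x x two_pos, ← mul_assoc, ← mul_pow]; norm_num

theorem exists_setAverage_abs_sub_rpow_preimage_ball_le (hp : 1 ≤ p) (hN₀ : 0 ≤ N)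
    (hu : ∀ x r, 0 < r → MemLp u (.ofReal p) (μ.restrict (ball x r)))
    (hN : ∀ x r, 0 < r → ⨍ y in ball x r, |u y - ⨍ z in ball x r, u z ∂μ| ^ p ∂μ ≤ N ^ p)
    (hψ : MeasurePreserving ψ μ μ) (hL : LipschitzWith K ψ) (hA : AntilipschitzWith K ψ)
    (hK : 0 < K) (x : E) {r : ℝ} (hr : 0 < r) {n : ℕ} (hn : (K : ℝ) ^ 2 ≤ 2 ^ n) :
    ∃ c, ⨍ z in ψ ⁻¹' ball x r, |u z - c| ^ p ∂μ ≤
      8 ^ finrank ℝ E * (2 * ((n + 1) * 2 ^ finrank ℝ E * N)) ^ p := by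
  set ε := r / K
  set β := (n + 1) * 2 ^ finrank ℝ E * N
  have hε : 0 < ε := div_pos hr (by exact_mod_cast hK)
  rcases (ψ ⁻¹' ball x r).eq_empty_or_nonempty with hS | ⟨z₀, hz₀⟩
  · exact ⟨0, by rw [hS, Measure.restrict_empty, average_zero_measure]; positivity⟩
  obtain ⟨F, hFS, hSF, hdisj⟩ :=
    (hA.isBounded_preimage (isBounded_ball (x := x) (r := r))).exists_finset_subset_biUnion_ball
      hε
  set c := ⨍ y in ball z₀ (2 ^ (n + 1) * (2 * ε)), u y ∂μ
  refine ⟨c, ?_⟩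
  have hNβ : N ≤ β := le_mul_of_one_le_left hN₀ <|
    one_le_mul_of_one_le_of_one_le (le_add_of_nonneg_left n.cast_nonneg) (one_le_pow₀ one_le_two)
  have hlocal : ∀ i ∈ F, ⨍ y in ball i (2 * ε), |u y - c| ^ p ∂μ ≤ (2 * β) ^ p := by
    intro i hi
    have hdist : dist i z₀ < 2 ^ n * (2 * ε) :=
      calc dist i z₀ ≤ K * dist (ψ i) (ψ z₀) := hA.le_mul_dist i z₀
        _ < K * (2 * r) := by
            have : dist (ψ i) (ψ z₀) < 2 * r := by
              linarith [dist_triangle_right (ψ i) (ψ z₀) x, mem_ball.1 (hFS hi), mem_ball.1 hz₀]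
            gcongr
        _ = (K : ℝ) ^ 2 * (2 * ε) := by simp only [ε]; field_simp
        _ ≤ 2 ^ n * (2 * ε) := by gcongr
    exact setAverage_abs_sub_rpow_le_of_abs_setAverage_sub_le hp hu hN (by positivity) hN₀ hNβ
      (abs_setAverage_sub_setAverage_le_of_dist_lt hp hN₀ hu hN (by positivity) hdist)
  have hint : ∫ z in ψ ⁻¹' ball x r, |u z - c| ^ p ∂μ ≤
      8 ^ finrank ℝ E * μ.real (ball x r) * (2 * β) ^ p :=
    (setIntegral_le_sum_measureReal_mul_of_subset_biUnion
      (measurableSet_ball.preimage hψ.measurable) (fun _ _ ↦ measurableSet_ball) hSF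
      (fun _ ↦ by positivity)
      (fun i _ ↦ (hu i _ (by positivity)).integrable_abs_sub_rpow (by linarith) c)
      (fun _ _ ↦ measure_ball_lt_top.ne) hlocal).trans <| by
        gcongr; exact sum_measureReal_ball_le_of_subset_preimage hψ hL hK hr hFS hdisj
  have hvol : μ.real (ψ ⁻¹' ball x r) = μ.real (ball x r) :=
    hψ.measureReal_preimage measurableSet_ball.nullMeasurableSet
  have hpos : 0 < μ.real (ball x r) :=
    ENNReal.toReal_pos (measure_ball_pos μ x hr).ne' measure_ball_lt_top.ne
  rw [setAverage_eq, smul_eq_mul, hvol, inv_mul_le_iff₀ hpos]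
  linarith

theorem setAverage_abs_sub_setAverage_comp_invFun_rpow_le (hp : 1 ≤ p) (hN₀ : 0 ≤ N)
    (hu : ∀ x r, 0 < r → MemLp u (.ofReal p) (μ.restrict (ball x r)))
    (hN : ∀ x r, 0 < r → ⨍ y in ball x r, |u y - ⨍ z in ball x r, u z ∂μ| ^ p ∂μ ≤ N ^ p)
    (hψ : MeasurePreserving ψ μ μ) (hL : LipschitzWith K ψ) (hA : AntilipschitzWith K ψ)
    (hK : 0 < K) {n : ℕ} (hn : (K : ℝ) ^ 2 ≤ 2 ^ n) (x : E) {r : ℝ} (hr : 0 < r) :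
    (⨍ y in ball x r, |u (Function.invFun ψ y) - ⨍ z in ball x r, u (Function.invFun ψ z) ∂μ| ^ p
      ∂μ) ^ (1 / p) ≤ 4 * 16 ^ finrank ℝ E * ((n + 1) * N) := by
  have hp0 : 0 < p := one_pos.trans_le hp
  have he : MeasurableEmbedding ψ :=
    (hA.isClosedEmbedding hL.uniformContinuous).measurableEmbedding
  have hS := hψ.measure_preimage_emb he (ball x r)
  have : IsFiniteMeasure (μ.restrict (ψ ⁻¹' ball x r)) :=
    isFiniteMeasure_restrict.2 (hS ▸ measure_ball_lt_top.ne)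
  have : NeZero (μ.restrict (ψ ⁻¹' ball x r)) :=
    ⟨by simpa [Measure.restrict_eq_zero, hS] using (measure_ball_pos μ x hr).ne'⟩
  obtain ⟨R, hR, hSR⟩ :=
    (hA.isBounded_preimage (isBounded_ball (x := x) (r := r))).subset_ball_lt 0 0
  have huS : MemLp u (.ofReal p) (μ.restrict (ψ ⁻¹' ball x r)) :=
    (hu 0 R hR).mono_measure (Measure.restrict_mono hSR le_rfl)
  obtain ⟨c, hc⟩ :=
    exists_setAverage_abs_sub_rpow_preimage_ball_le hp hN₀ hu hN hψ hL hA hK x hr hn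
  have hcomp := hψ.setAverage_invFun he
    (fun z ↦ |u z - ⨍ w in ψ ⁻¹' ball x r, u w ∂μ| ^ p) (ball x r)
  rw [hψ.setAverage_invFun he u, hcomp, one_div,
    Real.rpow_inv_le_iff_of_pos (average_nonneg fun _ ↦ by positivity) (by positivity) hp0]
  set β := (n + 1) * 2 ^ finrank ℝ E * N
  calc ⨍ z in ψ ⁻¹' ball x r, |u z - ⨍ z in ψ ⁻¹' ball x r, u z ∂μ| ^ p ∂μ
      ≤ 2 ^ p * ⨍ z in ψ ⁻¹' ball x r, |u z - c| ^ p ∂μ :=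
        average_abs_sub_average_rpow_le hp huS c
    _ ≤ 2 ^ p * (8 ^ finrank ℝ E * (2 * β) ^ p) := by gcongr
    _ ≤ 2 ^ p * ((8 ^ finrank ℝ E) ^ p * (2 * β) ^ p) := by
        gcongr
        exact Real.self_le_rpow_of_one_le (one_le_pow₀ (by norm_num)) hp
    _ = (4 * 16 ^ finrank ℝ E * ((n + 1) * N)) ^ p := by
        rw [← Real.mul_rpow (by positivity) (by positivity),
          ← Real.mul_rpow (by positivity) (by positivity)]
        congr 1
        rw [show (16 : ℝ) = 8 * 2 by norm_num, mul_pow]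
        ring

end Balls

theorem stmt18_general (d : ℕ) (p : ℝ) (hp : 1 ≤ p) :
    ∃ C : ℝ, 0 < C ∧
      ∀ (L t : ℝ), 0 ≤ L → 0 ≤ t →
      ∀ (ψ : EuclideanSpace ℝ (Fin d) → EuclideanSpace ℝ (Fin d)),
        Function.Bijective ψ →
        MeasurePreserving ψ volume volume →
        (∀ x y, Real.exp (-(L * t)) * dist x y ≤ dist (ψ x) (ψ y) ∧
          dist (ψ x) (ψ y) ≤ Real.exp (L * t) * dist x y) →
        ∀ (u₀ : EuclideanSpace ℝ (Fin d) → ℝ) (N : ℝ), 0 ≤ N →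
          (∀ (x : EuclideanSpace ℝ (Fin d)) (r : ℝ), 0 < r →
            MemLp u₀ (ENNReal.ofReal p) (volume.restrict (ball x r))) →
          (∀ (x : EuclideanSpace ℝ (Fin d)) (r : ℝ), 0 < r →
            (⨍ y in ball x r, |u₀ y - ⨍ z in ball x r, u₀ z| ^ p) ^ (1 / p) ≤ N) →
          ∀ (x : EuclideanSpace ℝ (Fin d)) (r : ℝ), 0 < r →
            (⨍ y in ball x r,
                |u₀ (Function.invFun ψ y) -
                  ⨍ z in ball x r, u₀ (Function.invFun ψ z)| ^ p) ^ (1 / p)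
              ≤ C * (1 + L * t) * N := by
  refine ⟨16 * 16 ^ d, by positivity, ?_⟩
  intro L t hL ht ψ _ hψ hlip u₀ N hN₀ hu hN x r hr
  set K : ℝ≥0 := ⟨Real.exp (L * t), (Real.exp_pos _).le⟩
  have hLip : LipschitzWith K ψ := .of_dist_le_mul fun a b ↦ (hlip a b).2
  have hAnti : AntilipschitzWith K ψ := .of_le_mul_dist fun a b ↦ by
    have h := (hlip a b).1
    rwa [Real.exp_neg, inv_mul_le_iff₀ (Real.exp_pos _)] at h
  have hNp : ∀ x r, 0 < r → ⨍ y in ball x r, |u₀ y - ⨍ z in ball x r, u₀ z| ^ p ≤ N ^ p :=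
    fun x r hr ↦ (Real.rpow_inv_le_iff_of_pos (average_nonneg fun _ ↦ by positivity)
      hN₀ (by linarith)).1 (by simpa only [one_div] using hN x r hr)
  set n := 2 * ⌈2 * (L * t)⌉₊
  have hn : (K : ℝ) ^ 2 ≤ 2 ^ n :=
    calc (K : ℝ) ^ 2 = Real.exp (L * t) ^ 2 := rfl
      _ = Real.exp (2 * (L * t)) := by rw [← Real.exp_nat_mul]; norm_num
      _ ≤ 2 ^ n := Real.exp_le_two_pow_two_mul_ceil _
  have hn' : (n : ℝ) + 1 ≤ 4 * (1 + L * t) := by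
    have := Nat.ceil_lt_add_one (show 0 ≤ 2 * (L * t) by positivity)
    push_cast [n]
    linarith
  calc _ ≤ 4 * 16 ^ d * ((n + 1) * N) := by
        simpa only [finrank_euclideanSpace_fin] using
          setAverage_abs_sub_setAverage_comp_invFun_rpow_le hp hN₀ hu hNp hψ hLip hAnti
            (NNReal.coe_pos.1 (Real.exp_pos _)) hn x hr
    _ ≤ 4 * 16 ^ d * (4 * (1 + L * t) * N) := by gcongr
    _ = 16 * 16 ^ d * (1 + L * t) * N := by ring

/-- BMO estimate for the solution `u = u₀ ∘ ψ⁻¹` of a transport equation along a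
measure-preserving flow map `ψ` satisfying `e^{−Lt}|x−y| ≤ |ψ(x)−ψ(y)| ≤ e^{Lt}|x−y|`:
if `u₀` has `BMO_p` seminorm at most `N` then `u` has `BMO_p` seminorm at most
`C·(1 + L·t)·N`, with `C` depending only on `d` and `p`. -/
theorem stmt18 (d : ℕ) (hd : 1 ≤ d) (p : ℝ) (hp : 1 ≤ p) :
    ∃ C : ℝ, 0 < C ∧
      ∀ (L t : ℝ), 0 ≤ L → 0 ≤ t →
      ∀ (ψ : EuclideanSpace ℝ (Fin d) → EuclideanSpace ℝ (Fin d)),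
        Function.Bijective ψ →
        MeasurePreserving ψ volume volume →
        (∀ x y, Real.exp (-(L * t)) * dist x y ≤ dist (ψ x) (ψ y) ∧
          dist (ψ x) (ψ y) ≤ Real.exp (L * t) * dist x y) →
        ∀ (u₀ : EuclideanSpace ℝ (Fin d) → ℝ) (N : ℝ), 0 ≤ N →
          (∀ (x : EuclideanSpace ℝ (Fin d)) (r : ℝ), 0 < r →
            MemLp u₀ (ENNReal.ofReal p) (volume.restrict (ball x r))) →
          (∀ (x : EuclideanSpace ℝ (Fin d)) (r : ℝ), 0 < r →
            (⨍ y in ball x r, |u₀ y - ⨍ z in ball x r, u₀ z| ^ p) ^ (1 / p) ≤ N) →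
          ∀ (x : EuclideanSpace ℝ (Fin d)) (r : ℝ), 0 < r →
            (⨍ y in ball x r,
                |u₀ (Function.invFun ψ y) -
                  ⨍ z in ball x r, u₀ (Function.invFun ψ z)| ^ p) ^ (1 / p)
              ≤ C * (1 + L * t) * N :=
  stmt18_general d p hp
end

section
/- Let d ≥ 1, a ∈ (0,1), p ∈ [1,∞), L ≥ 0 and t ≥ 0. Let ψ : ℝ^d → ℝ^d be a homeomorphism preserving Lebesgue measure and satisfying e^{−Lt}|x − y| ≤ |ψ(x) − ψ(y)| ≤ e^{Lt}|x − y| for all x, y ∈ ℝ^d. There is a constant C depending only on d, a and p such that: if u₀ ∈ L^p_loc(ℝ^d) satisfies (|B|^{−1−ap/d} ∫_B |u₀ − av_B u₀|^p)^{1/p} ≤ N for every ball B ⊂ ℝ^d, then the function u := u₀ ∘ ψ⁻¹ satisfies (|B|^{−1−ap/d} ∫_B |u − av_B u|^p)^{1/p} ≤ C·e^{aLt}·N for every ball B ⊂ ℝ^d. -/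
/-!
Changing variables directly in `∫_B |u - av_B u|^p` would lose a factor `e^{dLt/p}`, since
`ψ⁻¹(B(x,r))` is only known to lie in a ball of volume `e^{dLt} |B(x,r)|`. Instead one uses
Campanato's theorem: for `a > 0` the averages of `u₀` over the dyadic balls `B(y, 2^{1-k} R)`
differ by `O(N 2^{-ka} |B(y₀,R)|^{a/d})`, and summing this geometric series up to a Lebesgue point
`y` gives `|u₀ y - av_{B(y₀,R)} u₀| ≤ C N |B(y₀,R)|^{a/d}` for a.e. `y ∈ B(y₀,R)`. Since `ψ⁻¹` maps
`B(x,r)` into `B(ψ⁻¹ x, e^{Lt} r)`, the function `u` stays within `C N e^{aLt} |B(x,r)|^{a/d}` of a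
constant a.e. on `B(x,r)`, and this bounds its `Lip_p(a)` quotient on `B(x,r)` by `2 C e^{aLt} N`.
-/

open Metric MeasureTheory Filter Topology
open scoped NNReal

section Average

variable {α : Type*} [MeasurableSpace α] {μ : Measure α} {p : ℝ}

theorem MeasureTheory.MemLp.integrable_abs_rpow [IsFiniteMeasure μ] {f : α → ℝ} (hp : 0 ≤ p)
    (hf : MemLp f (ENNReal.ofReal p) μ) : Integrable (fun x => |f x| ^ p) μ := by
  simpa [Real.norm_eq_abs, ENNReal.toReal_ofReal hp] using hf.integrable_norm_rpow'

theorem abs_average_rpow_le_average_abs_rpow [IsFiniteMeasure μ] [NeZero μ] {f : α → ℝ}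
    (hp : 1 ≤ p) (hf : MemLp f (ENNReal.ofReal p) μ) :
    |⨍ x, f x ∂μ| ^ p ≤ ⨍ x, |f x| ^ p ∂μ := by
  have hp0 : 0 ≤ p := zero_le_one.trans hp
  have hfi : Integrable f μ := hf.integrable (ENNReal.one_le_ofReal.2 hp)
  calc |⨍ x, f x ∂μ| ^ p ≤ (⨍ x, |f x| ∂μ) ^ p := by
        gcongr
        simpa only [average_eq, smul_eq_mul, abs_mul, abs_inv, abs_of_nonneg measureReal_nonneg]
          using mul_le_mul_of_nonneg_left (abs_integral_le_integral_abs (f := f))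
            (inv_nonneg.2 (measureReal_nonneg (μ := μ) (s := Set.univ)))
    _ ≤ ⨍ x, |f x| ^ p ∂μ :=
        (convexOn_rpow hp).map_average_le (Real.continuous_rpow_const hp0).continuousOn
          isClosed_Ici (.of_forall fun x => abs_nonneg (f x)) hfi.abs
          (hf.integrable_abs_rpow hp0)

theorem abs_setAverage_sub_setAverage_rpow_le {s t : Set α} {f : α → ℝ} (hp : 1 ≤ p)
    (hst : s ⊆ t) (hs : μ s ≠ 0) (ht : μ t ≠ ⊤)
    (hf : MemLp f (ENNReal.ofReal p) (μ.restrict t)) :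
    |⨍ x in s, f x ∂μ - ⨍ x in t, f x ∂μ| ^ p ≤
      (μ.real s)⁻¹ * ∫ x in t, |f x - ⨍ y in t, f y ∂μ| ^ p ∂μ := by
  set c := ⨍ y in t, f y ∂μ
  have hs' : μ s < ⊤ := (measure_mono hst).trans_lt ht.lt_top
  have : Fact (μ s < ⊤) := ⟨hs'⟩
  have : Fact (μ t < ⊤) := ⟨ht.lt_top⟩
  have : NeZero (μ.restrict s) := ⟨by simpa [Measure.restrict_eq_zero] using hs⟩
  have hfs : MemLp f (ENNReal.ofReal p) (μ.restrict s) :=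
    hf.mono_measure (Measure.restrict_mono hst le_rfl)
  have havg : ⨍ x in s, (f x - c) ∂μ = ⨍ x in s, f x ∂μ - c := by
    rw [setAverage_eq, setAverage_eq, integral_sub (hfs.integrable (ENNReal.one_le_ofReal.2 hp))
      (integrable_const c), setIntegral_const, smul_sub, smul_smul,
      inv_mul_cancel₀ (a := μ.real s) (ENNReal.toReal_pos hs hs'.ne).ne', one_smul]
  calc |⨍ x in s, f x ∂μ - c| ^ p = |⨍ x in s, (f x - c) ∂μ| ^ p := by rw [havg]
    _ ≤ ⨍ x in s, |f x - c| ^ p ∂μ :=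
        abs_average_rpow_le_average_abs_rpow hp (hfs.sub (memLp_const c))
    _ = (μ.real s)⁻¹ * ∫ x in s, |f x - c| ^ p ∂μ := by rw [setAverage_eq, smul_eq_mul]
    _ ≤ (μ.real s)⁻¹ * ∫ x in t, |f x - c| ^ p ∂μ := by
        refine mul_le_mul_of_nonneg_left ?_ (inv_nonneg.2 measureReal_nonneg)
        exact setIntegral_mono_set
          ((hf.sub (memLp_const c)).integrable_abs_rpow (zero_le_one.trans hp))
          (ae_of_all _ fun x => Real.rpow_nonneg (abs_nonneg _) _) hst.eventuallyLE

theorem setIntegral_abs_sub_setAverage_rpow_le {s : Set α} {g : α → ℝ} {c M : ℝ} (hp : 0 ≤ p)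
    (hs : μ s ≠ ⊤) (hg : AEStronglyMeasurable g (μ.restrict s))
    (hgc : ∀ᵐ x ∂μ.restrict s, |g x - c| ≤ M) :
    ∫ x in s, |g x - ⨍ y in s, g y ∂μ| ^ p ∂μ ≤ (2 * M) ^ p * μ.real s := by
  rcases eq_or_ne (μ s) 0 with hs0 | hs0
  · simp [Measure.restrict_eq_zero.2 hs0, measureReal_def, hs0]
  have : Fact (μ s < ⊤) := ⟨hs.lt_top⟩
  have hgi : IntegrableOn g s μ := IntegrableOn.of_bound hs.lt_top hg (M + |c|) <| by
    filter_upwards [hgc] with x hx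
    rw [Real.norm_eq_abs]
    linarith [abs_sub_abs_le_abs_sub (g x) c]
  have havg : |⨍ y in s, g y ∂μ - c| ≤ M := by
    simpa only [mem_closedBall, Real.dist_eq] using
      (convex_closedBall c M).set_average_mem isClosed_closedBall hs0 hs
        (hgc.mono fun x hx => by rwa [mem_closedBall, Real.dist_eq]) hgi
  have hbound : ∀ᵐ x ∂μ.restrict s, ‖|g x - ⨍ y in s, g y ∂μ| ^ p‖ ≤ (2 * M) ^ p := by
    filter_upwards [hgc] with x hx
    rw [Real.norm_of_nonneg (by positivity)]
    gcongr
    linarith [abs_sub_le (g x) c (⨍ y in s, g y ∂μ), abs_sub_comm c (⨍ y in s, g y ∂μ)]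
  calc ∫ x in s, |g x - ⨍ y in s, g y ∂μ| ^ p ∂μ
      ≤ ‖∫ x in s, |g x - ⨍ y in s, g y ∂μ| ^ p ∂μ‖ := Real.le_norm_self _
    _ ≤ (2 * M) ^ p * μ.real s := by
        simpa only [measureReal_restrict_apply_univ] using norm_integral_le_of_norm_le_const hbound

end Average

theorem MeasureTheory.LocallyIntegrable.ae_tendsto_setAverage_ball {E F : Type*}
    [NormedAddCommGroup E] [NormedSpace ℝ E] [FiniteDimensional ℝ E] [Nontrivial E]
    [MeasurableSpace E] [BorelSpace E] {μ : Measure E} [μ.IsAddHaarMeasure]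
    [NormedAddCommGroup F] [NormedSpace ℝ F] [CompleteSpace F] {f : E → F}
    (hf : LocallyIntegrable f μ) :
    ∀ᵐ x ∂μ, Tendsto (fun r => ⨍ y in ball x r, f y ∂μ) (𝓝[>] 0) (𝓝 (f x)) := by
  filter_upwards [(Besicovitch.vitaliFamily μ).ae_tendsto_average hf] with x hx
  have hball : ∀ r, ball x r =ᵐ[μ] closedBall x r := fun r =>
    ae_eq_of_subset_of_measure_ge ball_subset_closedBall
      (Measure.addHaar_closedBall_eq_addHaar_ball μ x r).le measurableSet_ball.nullMeasurableSet
      measure_closedBall_lt_top.ne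
  simpa only [Function.comp_def, setAverage_congr (hball _)] using
    hx.comp (Besicovitch.tendsto_filterAt μ x)

theorem locallyIntegrable_of_forall_memLp_ball {X : Type*} [PseudoMetricSpace X] [ProperSpace X]
    [MeasurableSpace X] {μ : Measure X} [IsFiniteMeasureOnCompacts μ] {f : X → ℝ} {p : ℝ}
    (hp : 1 ≤ p) (hf : ∀ x r, 0 < r → MemLp f (ENNReal.ofReal p) (μ.restrict (ball x r))) :
    LocallyIntegrable f μ := fun x =>
  have : Fact (μ (ball x 1) < ⊤) := ⟨measure_ball_lt_top⟩
  ⟨ball x 1, ball_mem_nhds x one_pos, (hf x 1 one_pos).integrable (ENNReal.one_le_ofReal.2 hp)⟩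

theorem LipschitzWith.invFun_of_mul_dist_le {X Y : Type*} [PseudoMetricSpace X]
    [PseudoMetricSpace Y] [Nonempty X] {ψ : X → Y} (hψ : Function.Surjective ψ) {c : ℝ≥0}
    (hc : 0 < c) (h : ∀ x y, c * dist x y ≤ dist (ψ x) (ψ y)) :
    LipschitzWith c⁻¹ (Function.invFun ψ) := by
  refine LipschitzWith.of_dist_le_mul fun z w => ?_
  rw [NNReal.coe_inv, le_inv_mul_iff₀ (by exact_mod_cast hc)]
  simpa only [Function.rightInverse_invFun hψ _] using h (Function.invFun ψ z) (Function.invFun ψ w)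

theorem MeasureTheory.MeasurePreserving.invFun {X Y : Type*} [MeasurableSpace X]
    [MeasurableSpace Y] [Nonempty X] {μ : Measure X} {ν : Measure Y} {ψ : X → Y}
    (hψ : MeasurePreserving ψ μ ν) (hbij : Function.Bijective ψ)
    (hφ : Measurable (Function.invFun ψ)) : MeasurePreserving (Function.invFun ψ) ν μ :=
  let e : X ≃ᵐ Y :=
    { toFun := ψ
      invFun := Function.invFun ψ
      left_inv := Function.leftInverse_invFun hbij.1
      right_inv := Function.rightInverse_invFun hbij.2
      measurable_toFun := hψ.measurable
      measurable_invFun := hφ }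
  hψ.symm e

section Campanato

variable {d : ℕ} {a p N : ℝ}

-- The `Lip_p(a)` seminorm is the supremum of this quotient over all balls `B(x, r)`.
noncomputable def campanatoQuotient (d : ℕ) (a p : ℝ) (f : EuclideanSpace ℝ (Fin d) → ℝ)
    (x : EuclideanSpace ℝ (Fin d)) (r : ℝ) : ℝ :=
  ((volume (ball x r)).toReal ^ (-(1 + a * p / d)) *
    ∫ y in ball x r, |f y - ⨍ z in ball x r, f z| ^ p) ^ (1 / p)

theorem volume_real_ball_pos (x : EuclideanSpace ℝ (Fin d)) {r : ℝ} (hr : 0 < r) :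
    0 < volume.real (ball x r) :=
  ENNReal.toReal_pos (measure_ball_pos volume x hr).ne' measure_ball_lt_top.ne

theorem rpow_neg_mul_rpow_one_div_le_iff {b V I : ℝ} (hV : 0 < V) (hp : 0 < p) (hI : 0 ≤ I)
    (hN : 0 ≤ N) :
    (V ^ (-(1 + a * p / b)) * I) ^ (1 / p) ≤ N ↔ I ≤ V * (N * V ^ (a / b)) ^ p := by
  have hVN : V * (N * V ^ (a / b)) ^ p = N ^ p * (V ^ (-(1 + a * p / b)))⁻¹ := by
    rw [Real.mul_rpow hN (by positivity), ← Real.rpow_mul hV.le, Real.rpow_neg hV.le, inv_inv,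
      Real.rpow_add hV, Real.rpow_one, div_mul_eq_mul_div]
    ring_nf
  rw [one_div, Real.rpow_inv_le_iff_of_pos (by positivity) hN hp, hVN,
    ← div_eq_mul_inv, le_div_iff₀ (by positivity), mul_comm]

theorem campanatoQuotient_le_iff (hp : 0 < p) (hN : 0 ≤ N) {f : EuclideanSpace ℝ (Fin d) → ℝ}
    {x : EuclideanSpace ℝ (Fin d)} {r : ℝ} (hr : 0 < r) :
    campanatoQuotient d a p f x r ≤ N ↔
      ∫ y in ball x r, |f y - ⨍ z in ball x r, f z| ^ p ≤
        volume.real (ball x r) * (N * volume.real (ball x r) ^ (a / d)) ^ p :=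
  rpow_neg_mul_rpow_one_div_le_iff (volume_real_ball_pos x hr) hp
    (integral_nonneg fun _ => by positivity) hN

theorem campanatoQuotient_le_of_abs_sub_le (hp : 0 < p) {g : EuclideanSpace ℝ (Fin d) → ℝ}
    {x : EuclideanSpace ℝ (Fin d)} {r c A : ℝ} (hr : 0 < r) (hA : 0 ≤ A)
    (hg : AEStronglyMeasurable g (volume.restrict (ball x r)))
    (hgc : ∀ᵐ y ∂volume.restrict (ball x r), |g y - c| ≤ A * volume.real (ball x r) ^ (a / d)) :
    campanatoQuotient d a p g x r ≤ 2 * A := by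
  rw [campanatoQuotient_le_iff hp (by positivity) hr]
  calc _ ≤ (2 * (A * volume.real (ball x r) ^ (a / d))) ^ p * volume.real (ball x r) :=
        setIntegral_abs_sub_setAverage_rpow_le hp.le measure_ball_lt_top.ne hg hgc
    _ = _ := by rw [← mul_assoc, mul_comm]

theorem volume_real_ball_mul (hd : 1 ≤ d) (x y : EuclideanSpace ℝ (Fin d)) {s : ℝ} (hs : 0 ≤ s)
    (r : ℝ) : volume.real (ball y (s * r)) = s ^ d * volume.real (ball x r) := by
  have : Nonempty (Fin d) := ⟨⟨0, hd⟩⟩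
  rw [measureReal_def, measureReal_def, Measure.addHaar_ball_mul volume y hs,
    Measure.addHaar_ball_center volume x, ENNReal.toReal_mul, ENNReal.toReal_ofReal (by positivity),
    finrank_euclideanSpace_fin]

theorem volume_real_ball_mul_rpow (hd : 1 ≤ d) (x y : EuclideanSpace ℝ (Fin d)) {s : ℝ}
    (hs : 0 ≤ s) (r : ℝ) :
    volume.real (ball y (s * r)) ^ (a / d) = s ^ a * volume.real (ball x r) ^ (a / d) := by
  have hd0 : (d : ℝ) ≠ 0 := by positivity
  rw [volume_real_ball_mul hd x y hs, Real.mul_rpow (by positivity) measureReal_nonneg,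
    ← Real.rpow_natCast, ← Real.rpow_mul hs, mul_div_cancel₀ a hd0]

theorem abs_setAverage_ball_sub_le (hd : 1 ≤ d) (hp : 1 ≤ p) (hN : 0 ≤ N)
    {f : EuclideanSpace ℝ (Fin d) → ℝ} {y z : EuclideanSpace ℝ (Fin d)} {ρ : ℝ} (hρ : 0 < ρ)
    (hf : MemLp f (ENNReal.ofReal p) (volume.restrict (ball z (2 * ρ))))
    (hfN : campanatoQuotient d a p f z (2 * ρ) ≤ N) (hsub : ball y ρ ⊆ ball z (2 * ρ)) :
    |(⨍ w in ball y ρ, f w) - ⨍ w in ball z (2 * ρ), f w| ≤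
      2 ^ (d / p) * N * volume.real (ball z (2 * ρ)) ^ (a / d) := by
  have hp0 : 0 < p := zero_lt_one.trans_le hp
  have hVy : 0 < volume.real (ball y ρ) := volume_real_ball_pos y hρ
  have hV : (volume.real (ball y ρ))⁻¹ * volume.real (ball z (2 * ρ)) = 2 ^ d := by
    rw [volume_real_ball_mul hd y z zero_le_two ρ]
    field_simp
  set V := volume.real (ball z (2 * ρ))
  rw [← Real.rpow_le_rpow_iff (abs_nonneg _) (by positivity) hp0]
  calc _ ≤ (volume.real (ball y ρ))⁻¹ *
        ∫ w in ball z (2 * ρ), |f w - ⨍ v in ball z (2 * ρ), f v| ^ p :=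
        abs_setAverage_sub_setAverage_rpow_le hp hsub (measure_ball_pos volume y hρ).ne'
          measure_ball_lt_top.ne hf
    _ ≤ (volume.real (ball y ρ))⁻¹ * (V * (N * V ^ (a / d)) ^ p) :=
        mul_le_mul_of_nonneg_left ((campanatoQuotient_le_iff hp0 hN (by positivity)).1 hfN)
          (inv_nonneg.2 hVy.le)
    _ = (volume.real (ball y ρ))⁻¹ * V * (N * V ^ (a / d)) ^ p := by ring
    _ = (2 ^ (d / p) * N * V ^ (a / d)) ^ p := by
        rw [hV, mul_assoc (2 ^ _), Real.mul_rpow (x := 2 ^ ((d : ℝ) / p)) (by positivity)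
          (by positivity), ← Real.rpow_mul zero_le_two, div_mul_cancel₀ _ hp0.ne',
          Real.rpow_natCast]

-- `2^{d/p}` comes from doubling a ball, `2^a` from `B(y₀,R) ⊆ B(y,2R)` and `(1 - 2^{-a})⁻¹ + 1`
-- from the dyadic geometric series in `abs_sub_setAverage_ball_le`.
noncomputable def holderConst (d : ℕ) (a p : ℝ) : ℝ :=
  2 ^ (d / p) * 2 ^ a * ((1 - 2 ^ (-a))⁻¹ + 1)

theorem holderConst_pos (ha : 0 < a) : 0 < holderConst d a p := by
  have : (2 : ℝ) ^ (-a) < 1 := Real.rpow_lt_one_of_one_lt_of_neg one_lt_two (neg_lt_zero.2 ha)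
  have : 0 < 1 - (2 : ℝ) ^ (-a) := by linarith
  unfold holderConst
  positivity

theorem abs_sub_setAverage_ball_le (hd : 1 ≤ d) (ha : 0 < a) (hp : 1 ≤ p) (hN : 0 ≤ N)
    {f : EuclideanSpace ℝ (Fin d) → ℝ}
    (hf : ∀ x r, 0 < r → MemLp f (ENNReal.ofReal p) (volume.restrict (ball x r)))
    (hfN : ∀ x r, 0 < r → campanatoQuotient d a p f x r ≤ N)
    {y₀ y : EuclideanSpace ℝ (Fin d)} {R : ℝ} (hy : y ∈ ball y₀ R)
    (hleb : Tendsto (fun ρ => ⨍ z in ball y ρ, f z) (𝓝[>] 0) (𝓝 (f y))) :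
    |f y - ⨍ z in ball y₀ R, f z| ≤ holderConst d a p * N * volume.real (ball y₀ R) ^ (a / d) := by
  have hR : 0 < R := pos_of_mem_ball hy
  set A := 2 ^ (d / p) * N * (2 ^ a * volume.real (ball y₀ R) ^ (a / d))
  set q : ℝ := 2 ^ (-a)
  have hq : q < 1 := Real.rpow_lt_one_of_one_lt_of_neg one_lt_two (neg_lt_zero.2 ha)
  set u : ℕ → ℝ := fun k => ⨍ z in ball y (2 * 2⁻¹ ^ k * R), f z
  have hstep : ∀ k, dist (u k) (u (k + 1)) ≤ A * q ^ k := by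
    intro k
    have hρ : 0 < 2 * 2⁻¹ ^ (k + 1) * R := by positivity
    have h := abs_setAverage_ball_sub_le hd hp hN (y := y) (z := y) hρ (hf _ _ (by positivity))
      (hfN _ _ (by positivity)) (ball_subset_ball (by linarith))
    rw [show 2 * (2 * 2⁻¹ ^ (k + 1) * R) = (2 * 2⁻¹ ^ k) * R by ring,
      volume_real_ball_mul_rpow hd y₀ y (by positivity),
      Real.mul_rpow zero_le_two (by positivity), ← Real.rpow_pow_comm (by norm_num),
      Real.inv_rpow zero_le_two, ← Real.rpow_neg zero_le_two] at h
    rw [dist_comm, Real.dist_eq]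
    convert h using 1
    ring
  have htend : Tendsto u atTop (𝓝 (f y)) := by
    refine hleb.comp (tendsto_nhdsWithin_iff.2
      ⟨?_, .of_forall fun k => Set.mem_Ioi.2 (by positivity)⟩)
    simpa using ((tendsto_pow_atTop_nhds_zero_of_lt_one (by norm_num) (by norm_num :
      (2⁻¹ : ℝ) < 1)).const_mul 2).mul_const R
  have hlim : |f y - u 0| ≤ A / (1 - q) := by
    rw [← Real.dist_eq, dist_comm]
    exact dist_le_of_le_geometric_of_tendsto₀ q A hq hstep htend
  have hfirst : |u 0 - ⨍ z in ball y₀ R, f z| ≤ A := by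
    have h := abs_setAverage_ball_sub_le hd hp hN (y := y₀) (z := y) hR
      (hf _ _ (by positivity)) (hfN _ _ (by positivity))
      (ball_subset_ball' (by linarith [mem_ball'.1 hy]))
    rw [volume_real_ball_mul_rpow hd y₀ y zero_le_two, abs_sub_comm] at h
    simpa [u] using h
  calc |f y - ⨍ z in ball y₀ R, f z| ≤ |f y - u 0| + |u 0 - ⨍ z in ball y₀ R, f z| :=
        abs_sub_le _ _ _
    _ ≤ A / (1 - q) + A := add_le_add hlim hfirst
    _ = holderConst d a p * N * volume.real (ball y₀ R) ^ (a / d) := by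
        simp only [holderConst, A, div_eq_mul_inv]
        ring

theorem campanatoQuotient_comp_le (hd : 1 ≤ d) (ha : 0 < a) (hp : 1 ≤ p) (hN : 0 ≤ N)
    {f : EuclideanSpace ℝ (Fin d) → ℝ}
    (hf : ∀ x r, 0 < r → MemLp f (ENNReal.ofReal p) (volume.restrict (ball x r)))
    (hfN : ∀ x r, 0 < r → campanatoQuotient d a p f x r ≤ N)
    {φ : EuclideanSpace ℝ (Fin d) → EuclideanSpace ℝ (Fin d)} {K : ℝ≥0} (hK : 0 < K)
    (hφ : LipschitzWith K φ) (hφ₀ : Measure.QuasiMeasurePreserving φ volume volume)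
    (x : EuclideanSpace ℝ (Fin d)) {r : ℝ} (hr : 0 < r) :
    campanatoQuotient d a p (fun y => f (φ y)) x r ≤ 2 * holderConst d a p * K ^ a * N := by
  have : Nonempty (Fin d) := ⟨⟨0, hd⟩⟩
  have hfloc : LocallyIntegrable f volume := locallyIntegrable_of_forall_memLp_ball hp hf
  have hleb := hφ₀.ae hfloc.ae_tendsto_setAverage_ball
  have hclose : ∀ᵐ y ∂volume.restrict (ball x r),
      |f (φ y) - ⨍ z in ball (φ x) (K * r), f z| ≤
        holderConst d a p * N * K ^ a * volume.real (ball x r) ^ (a / d) := by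
    filter_upwards [ae_restrict_of_ae hleb, ae_restrict_mem measurableSet_ball] with y hy hyx
    calc _ ≤ holderConst d a p * N * volume.real (ball (φ x) (K * r)) ^ (a / d) :=
          abs_sub_setAverage_ball_le hd ha hp hN hf hfN (hφ.mapsTo_ball hK.ne' x r hyx) hy
      _ = _ := by rw [volume_real_ball_mul_rpow hd x (φ x) K.coe_nonneg]; ring
  calc _ ≤ 2 * (holderConst d a p * N * K ^ a) :=
        campanatoQuotient_le_of_abs_sub_le (zero_lt_one.trans_le hp) hr
          (by have := holderConst_pos (d := d) (p := p) ha; positivity)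
          (hfloc.aestronglyMeasurable.comp_quasiMeasurePreserving hφ₀).restrict hclose
    _ = _ := by ring

end Campanato

/-- Hölder (`Lip_p(a)`) estimate for the solution `u = u₀ ∘ ψ⁻¹` of a transport equation along
a measure-preserving flow map `ψ` satisfying `e^{−Lt}|x−y| ≤ |ψ(x)−ψ(y)| ≤ e^{Lt}|x−y|`:
if `u₀` has `Lip_p(a)` seminorm at most `N` then `u` has `Lip_p(a)` seminorm at most
`C·e^{aLt}·N`, with `C` depending only on `d`, `a` and `p`. -/
theorem stmt19 (d : ℕ) (hd : 1 ≤ d) (a : ℝ) (ha : a ∈ Set.Ioo (0 : ℝ) 1)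
    (p : ℝ) (hp : 1 ≤ p) :
    ∃ C : ℝ, 0 < C ∧
      ∀ (L t : ℝ), 0 ≤ L → 0 ≤ t →
      ∀ (ψ : EuclideanSpace ℝ (Fin d) → EuclideanSpace ℝ (Fin d)),
        Function.Bijective ψ →
        MeasurePreserving ψ volume volume →
        (∀ x y, Real.exp (-(L * t)) * dist x y ≤ dist (ψ x) (ψ y) ∧
          dist (ψ x) (ψ y) ≤ Real.exp (L * t) * dist x y) →
        ∀ (u₀ : EuclideanSpace ℝ (Fin d) → ℝ) (N : ℝ), 0 ≤ N →
          (∀ (x : EuclideanSpace ℝ (Fin d)) (r : ℝ), 0 < r →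
            MemLp u₀ (ENNReal.ofReal p) (volume.restrict (ball x r))) →
          (∀ (x : EuclideanSpace ℝ (Fin d)) (r : ℝ), 0 < r →
            ((volume (ball x r)).toReal ^ (-(1 + a * p / d)) *
              ∫ y in ball x r, |u₀ y - ⨍ z in ball x r, u₀ z| ^ p) ^ (1 / p) ≤ N) →
          ∀ (x : EuclideanSpace ℝ (Fin d)) (r : ℝ), 0 < r →
            ((volume (ball x r)).toReal ^ (-(1 + a * p / d)) *
              ∫ y in ball x r,
                |u₀ (Function.invFun ψ y) -
                  ⨍ z in ball x r, u₀ (Function.invFun ψ z)| ^ p) ^ (1 / p)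
              ≤ C * Real.exp (a * L * t) * N := by
  refine ⟨2 * holderConst d a p, mul_pos two_pos (holderConst_pos ha.1), ?_⟩
  intro L t _ _ ψ hbij hψ hdist u₀ N hN hu₀ hu₀N x r hr
  set c : ℝ≥0 := ⟨Real.exp (-(L * t)), (Real.exp_pos _).le⟩
  have hφ : LipschitzWith c⁻¹ (Function.invFun ψ) :=
    LipschitzWith.invFun_of_mul_dist_le hbij.2 (Real.exp_pos _) fun x y => (hdist x y).1
  have hc : ((c⁻¹ : ℝ≥0) : ℝ) ^ a = Real.exp (a * L * t) := by
    rw [NNReal.coe_inv]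
    change (Real.exp (-(L * t)))⁻¹ ^ a = _
    rw [← Real.exp_neg, neg_neg, ← Real.exp_mul]
    ring_nf
  have h := campanatoQuotient_comp_le hd ha.1 hp hN hu₀ hu₀N (inv_pos.2 (Real.exp_pos _)) hφ
    (hψ.invFun hbij hφ.continuous.measurable).quasiMeasurePreserving x hr
  rw [hc] at h
  exact h.trans_eq (by ring)
end
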